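/- arXiv:1709.04431 — 3 statements merged into one kernel-verified Lean document; each statement's English description precedes it below -/
import Mathlib

section
/- Let X be a finite pure n-dimensional weighted simplicial complex which is (n+1)-partite with sides S_0,…,S_n, such that the 1-skeleton of X and the 1-skeletons of all links of X of dimension > 0 are connected. Then (n+1)/n is an eigenvalue of Δ_0^+, and the eigenspace of the eigenvalue (n+1)/n is spanned by the functions φ_i (0 ≤ i ≤ n) defined by φ_i(u) = n if u ∈ S_i and φ_i(u) = −1 otherwise. -/
open Finset

variable {V : Type} [Fintype V] [DecidableEq V]

/-- A finite abstract simplicial complex on the vertex type `V`. -/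
structure SComplex (V : Type) [Fintype V] [DecidableEq V] where
  faces : Finset (Finset V)
  empty_mem : ∅ ∈ faces
  down_closed : ∀ s ∈ faces, ∀ t, t ⊆ s → t ∈ faces

namespace SComplex

/-- `X` is pure `n`-dimensional: every face is contained in an `n`-dimensional face. -/
def Pure (X : SComplex V) (n : ℕ) : Prop :=
  (∀ s ∈ X.faces, s.card ≤ n + 1) ∧
    ∀ s ∈ X.faces, ∃ t ∈ X.faces, s ⊆ t ∧ t.card = n + 1

/-- `σ` is an ordered simplex with `j` vertices (an element of `Σ(j-1)`). -/
def IsOSimp (X : SComplex V) {j : ℕ} (σ : Fin j → V) : Prop :=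
  Function.Injective σ ∧ Finset.image σ Finset.univ ∈ X.faces

instance {j : ℕ} (X : SComplex V) (σ : Fin j → V) : Decidable (X.IsOSimp σ) := by
  unfold IsOSimp; infer_instance

/-- A balanced, strictly positive weight function on the simplices of `X`. -/
def IsBalanced (X : SComplex V) (n : ℕ) (m : Finset V → ℝ) : Prop :=
  (∀ s ∈ X.faces, 0 < m s) ∧
    ∀ s ∈ X.faces, s.card ≤ n →
      m s = ∑ t ∈ X.faces.filter fun t => s ⊆ t ∧ t.card = s.card + 1, m t

/-- The weight of an ordered tuple (zero off the ordered simplices). -/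
noncomputable def wt (X : SComplex V) (m : Finset V → ℝ) {j : ℕ} (σ : Fin j → V) : ℝ :=
  if X.IsOSimp σ then m (Finset.image σ Finset.univ) else 0

/-- `φ` is a `j`-vertex form, i.e. an element of `C^{j-1}(X,ℝ)`:
antisymmetric and supported on the ordered simplices. -/
def IsForm (X : SComplex V) (j : ℕ) (φ : (Fin j → V) → ℝ) : Prop :=
  (∀ (σ : Fin j → V) (π : Equiv.Perm (Fin j)),
      φ (σ ∘ π) = ((Equiv.Perm.sign π : ℤ) : ℝ) * φ σ) ∧
    ∀ σ : Fin j → V, ¬X.IsOSimp σ → φ σ = 0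

/-- The inner product on `j`-vertex forms (`C^{j-1}(X,ℝ)`). -/
noncomputable def innerF (X : SComplex V) (m : Finset V → ℝ) (j : ℕ)
    (φ ψ : (Fin j → V) → ℝ) : ℝ :=
  ∑ σ : Fin j → V, X.wt m σ / (Nat.factorial j : ℝ) * (φ σ * ψ σ)

/-- The sum of a quantity over all ordered simplices with `j` vertices. -/
noncomputable def sumOSimp (X : SComplex V) (j : ℕ) (F : (Fin j → V) → ℝ) : ℝ :=
  ∑ σ : Fin j → V, if X.IsOSimp σ then F σ else 0

/-- The simplicial differential `d`. -/
def dOp {j : ℕ} (φ : (Fin j → V) → ℝ) : (Fin (j + 1) → V) → ℝ :=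
  fun σ => ∑ i : Fin (j + 1), (-1 : ℝ) ^ (i : ℕ) * φ (σ ∘ i.succAbove)

/-- The codifferential `δ` (the adjoint of `d`). -/
noncomputable def deltaOp (X : SComplex V) (m : Finset V → ℝ) {j : ℕ}
    (φ : (Fin (j + 1) → V) → ℝ) : (Fin j → V) → ℝ :=
  fun τ => ∑ v : V, X.wt m (Fin.cons v τ) / X.wt m τ * φ (Fin.cons v τ)

/-- The upper Laplacian `Δ⁺` on `j`-vertex forms (`C^{j-1}`). -/
noncomputable def lapPlus (X : SComplex V) (m : Finset V → ℝ) (j : ℕ)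
    (φ : (Fin j → V) → ℝ) : (Fin j → V) → ℝ :=
  X.deltaOp m (dOp φ)

/-- The lower Laplacian `Δ⁻` on `(j+1)`-vertex forms (`C^j`). -/
noncomputable def lapMinus (X : SComplex V) (m : Finset V → ℝ) (j : ℕ)
    (φ : (Fin (j + 1) → V) → ℝ) : (Fin (j + 1) → V) → ℝ :=
  dOp (X.deltaOp m φ)

/-- The set of eigenvalues of `Δ⁺` on `j`-vertex forms. -/
def specLapPlus (X : SComplex V) (m : Finset V → ℝ) (j : ℕ) : Set ℝ :=
  {μ | ∃ φ : (Fin j → V) → ℝ, X.IsForm j φ ∧ φ ≠ 0 ∧ X.lapPlus m j φ = μ • φ}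

/-- The set of eigenvalues of `Δ⁻` on `(j+1)`-vertex forms (`C^j`). -/
def specLapMinus (X : SComplex V) (m : Finset V → ℝ) (j : ℕ) : Set ℝ :=
  {μ | ∃ φ : (Fin (j + 1) → V) → ℝ, X.IsForm (j + 1) φ ∧ φ ≠ 0 ∧ X.lapMinus m j φ = μ • φ}

/-- The link of a face `s`. -/
def link (X : SComplex V) (s : Finset V) : SComplex V where
  faces := insert ∅ (X.faces.filter fun t => Disjoint s t ∧ s ∪ t ∈ X.faces)
  empty_mem := Finset.mem_insert_self _ _
  down_closed := by
    intro a ha t hts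
    rcases Finset.mem_insert.mp ha with h | h
    · refine Finset.mem_insert.mpr (Or.inl ?_)
      subst h; exact Finset.subset_empty.mp hts
    · rw [Finset.mem_filter] at h
      refine Finset.mem_insert.mpr (Or.inr (Finset.mem_filter.mpr
        ⟨X.down_closed a h.1 t hts, Disjoint.mono_right hts h.2.1,
          X.down_closed _ h.2.2 _ (Finset.union_subset_union (Finset.Subset.refl s) hts)⟩))

/-- The induced (balanced) weight on the link of `s`. -/
def linkWt (m : Finset V → ℝ) (s : Finset V) : Finset V → ℝ := fun t => m (s ∪ t)

/-- The graph given by the 1-skeleton of `X`. -/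
def skeleton (X : SComplex V) : SimpleGraph V where
  Adj u v := u ≠ v ∧ ({u, v} : Finset V) ∈ X.faces
  symm := ⟨by
    intro u v h
    exact ⟨h.1.symm, by rw [Finset.pair_comm]; exact h.2⟩⟩
  loopless := ⟨fun u h => h.1 rfl⟩

/-- The 1-skeleton of `X` is connected (on the vertices of `X`). -/
def SkelConnected (X : SComplex V) : Prop :=
  ∀ u v : V, ({u} : Finset V) ∈ X.faces → ({v} : Finset V) ∈ X.faces →
    X.skeleton.Reachable u v

/-- The 1-skeleton of `X` and the 1-skeletons of all links of `X` of dimension `> 0`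
are connected. -/
def AllLinksConnected (X : SComplex V) (n : ℕ) : Prop :=
  X.SkelConnected ∧ ∀ s ∈ X.faces, s.card < n → (X.link s).SkelConnected

/-- The localization `φ_τ ∈ C⁰(X_τ)` of a `(k+1)`-vertex form `φ` at an ordered
`k`-vertex simplex `τ`. -/
def localize {k : ℕ} (φ : (Fin (k + 1) → V) → ℝ) (τ : Fin k → V) : (Fin 1 → V) → ℝ :=
  fun σ => φ (Fin.append τ σ)

/-- The restriction of a cochain to the subcomplex `Y` (truncating off `Y`). -/
def restrict (Y : SComplex V) {j : ℕ} (φ : (Fin j → V) → ℝ) : (Fin j → V) → ℝ :=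
  fun σ => if Y.IsOSimp σ then φ σ else 0

/-- `S` is an `(n+1)`-partition of `X`: the vertices of `X` are partitioned into the
sides `S i`, and every edge joins two distinct sides. -/
def IsPartition (X : SComplex V) (n : ℕ) (S : Fin (n + 1) → Finset V) : Prop :=
  (∀ i, ∀ v ∈ S i, ({v} : Finset V) ∈ X.faces) ∧
    (∀ v : V, ({v} : Finset V) ∈ X.faces → ∃! i, v ∈ S i) ∧
    ∀ u v : V, u ≠ v → ({u, v} : Finset V) ∈ X.faces → ∀ i, u ∈ S i → v ∉ S i

/-- The side differential `d_{(k,j)}` with respect to the side `S`. -/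
def dSide (S : Finset V) {j : ℕ} (φ : (Fin j → V) → ℝ) : (Fin (j + 1) → V) → ℝ :=
  fun σ => ∑ i : Fin (j + 1),
    if σ i ∈ S then (-1 : ℝ) ^ (i : ℕ) * φ (σ ∘ i.succAbove) else 0

/-- The adjoint `δ_{(k,j)}` of the side differential. -/
noncomputable def deltaSide (X : SComplex V) (m : Finset V → ℝ) (S : Finset V) {j : ℕ}
    (φ : (Fin (j + 1) → V) → ℝ) : (Fin j → V) → ℝ :=
  fun τ => ∑ v ∈ S, X.wt m (Fin.cons v τ) / X.wt m τ * φ (Fin.cons v τ)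

/-- The side lower Laplacian `Δ⁻_{(k,j)}` on `(j+1)`-vertex forms (`C^j`). -/
noncomputable def lapMinusSide (X : SComplex V) (m : Finset V → ℝ) (S : Finset V) (j : ℕ)
    (φ : (Fin (j + 1) → V) → ℝ) : (Fin (j + 1) → V) → ℝ :=
  dSide S (X.deltaSide m S φ)

/-!
By the balancing condition a face of codimension `j` weighs `j!` times the total weight of the
facets containing it. Applied to vertices and edges this gives, at every vertex `u`,
`m(u) ((n + 1) φ(u) - n Δ⁺φ(u)) = n! ∑_{σ ∋ u} m(σ) ∑_{x ∈ σ} φ(x)`, the sums running over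
facets. Summing against `φ` yields `n! ∑_σ m(σ) (∑_{x ∈ σ} φ(x))²`, so the
`(n + 1)/n`-eigenfunctions are exactly the functions summing to zero over every facet. Every
facet meets every side exactly once, and connectivity of the links shows, by induction on the
dimension, that such a function is constant on each side, say `a_i` on `S i` with `∑ a_i = 0`;
it is then `∑ (a_i / (n + 1)) φ_i`.
-/

set_option linter.unusedSectionVars false

open Function

variable (X : SComplex V)

section Tuples

lemma image_const_fin_one (v : V) : image (const (Fin 1) v) univ = {v} :=
  image_const univ_nonempty v

lemma isOSimp_const_iff (v : V) : X.IsOSimp (const (Fin 1) v) ↔ {v} ∈ X.faces := by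
  simp [IsOSimp, injective_of_subsingleton]

lemma wt_const (m : Finset V → ℝ) (v : V) :
    X.wt m (const (Fin 1) v) = if {v} ∈ X.faces then m {v} else 0 := by
  simp only [wt, isOSimp_const_iff, image_const_fin_one]

lemma image_cons_const (u v : V) :
    image (Fin.cons v (const (Fin 1) u) : Fin 2 → V) univ = {v, u} := by
  ext x; simp [Fin.exists_fin_two, eq_comm]

lemma isOSimp_cons_const_iff (u v : V) :
    X.IsOSimp (Fin.cons v (const (Fin 1) u) : Fin 2 → V) ↔ v ≠ u ∧ {v, u} ∈ X.faces := by
  simp [IsOSimp, image_cons_const, Fin.cons_injective_iff, injective_of_subsingleton, eq_comm]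

lemma wt_cons_const (m : Finset V → ℝ) (u v : V) :
    X.wt m (Fin.cons v (const (Fin 1) u) : Fin 2 → V) =
      if v ≠ u ∧ {v, u} ∈ X.faces then m {v, u} else 0 := by
  simp only [wt, isOSimp_cons_const_iff, image_cons_const]

lemma dOp_cons_const (φ : (Fin 1 → V) → ℝ) (u v : V) :
    dOp φ (Fin.cons v (const (Fin 1) u)) = φ (const (Fin 1) u) - φ (const (Fin 1) v) := by
  have h : (Fin.cons v (const (Fin 1) u) : Fin 2 → V) ∘ (1 : Fin 2).succAbove = const (Fin 1) v :=
    funext fun i => by fin_cases i; rfl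
  simp [dOp, Fin.sum_univ_two, h, sub_eq_add_neg]

lemma forall_fin_one_fun_iff (p : (Fin 1 → V) → Prop) : (∀ σ, p σ) ↔ ∀ v, p (const (Fin 1) v) :=
  (Equiv.funUnique (Fin 1) V).symm.forall_congr_right.symm

lemma funext_const {F G : (Fin 1 → V) → ℝ} (h : ∀ v, F (const (Fin 1) v) = G (const (Fin 1) v)) :
    F = G :=
  funext ((forall_fin_one_fun_iff _).mpr h)

lemma isForm_one_iff (φ : (Fin 1 → V) → ℝ) :
    X.IsForm 1 φ ↔ ∀ v, {v} ∉ X.faces → φ (const (Fin 1) v) = 0 := by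
  have hperm : ∀ (σ : Fin 1 → V) (π : Equiv.Perm (Fin 1)),
      φ (σ ∘ π) = ((Equiv.Perm.sign π : ℤ) : ℝ) * φ σ := by
    intro σ π
    simp [Subsingleton.elim π 1]
  simp only [IsForm, hperm, implies_true, true_and, ← isOSimp_const_iff]
  exact forall_fin_one_fun_iff _

end Tuples

section Weights

variable {X}

def facets (n : ℕ) : Finset (Finset V) := {t ∈ X.faces | t.card = n + 1}

lemma mem_facets {n : ℕ} {t : Finset V} : t ∈ X.facets n ↔ t ∈ X.faces ∧ t.card = n + 1 :=
  mem_filter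

lemma mem_faces_of_subset {s t : Finset V} (ht : t ∈ X.faces) (hst : s ⊆ t) : s ∈ X.faces :=
  X.down_closed t ht s hst

lemma mem_faces_of_mem_facets {s σ : Finset V} {n : ℕ} (hσ : σ ∈ X.facets n) (hs : s ⊆ σ) :
    s ∈ X.faces :=
  mem_faces_of_subset (X.mem_facets.mp hσ).1 hs

lemma card_filter_covers_subset {s σ : Finset V} (hσ : σ ∈ X.faces) (hsσ : s ⊆ σ) :
    #{t ∈ {t ∈ X.faces | s ⊆ t ∧ t.card = s.card + 1} | t ⊆ σ} = σ.card - s.card := by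
  have himage : {t ∈ {t ∈ X.faces | s ⊆ t ∧ t.card = s.card + 1} | t ⊆ σ} =
      (σ \ s).image (insert · s) := by
    ext t
    simp only [mem_filter, mem_image, mem_sdiff]
    constructor
    · rintro ⟨⟨-, hst, hcard⟩, htσ⟩
      obtain ⟨x, hx, rfl⟩ := exists_eq_insert_iff.mpr ⟨hst, hcard.symm⟩
      exact ⟨x, ⟨htσ (mem_insert_self x s), hx⟩, rfl⟩
    · rintro ⟨x, ⟨hxσ, hxs⟩, rfl⟩
      have hsub : insert x s ⊆ σ := insert_subset hxσ hsσ
      exact ⟨⟨mem_faces_of_subset hσ hsub, subset_insert x s, card_insert_of_notMem hxs⟩, hsub⟩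
  rw [himage, card_image_of_injOn, card_sdiff_of_subset hsσ]
  intro x hx y _ hxy
  exact (insert_inj (mem_sdiff.mp hx).2).mp hxy

lemma IsBalanced.eq_factorial_mul_sum_facets {n : ℕ} {m : Finset V → ℝ} (hm : X.IsBalanced n m)
    (j : ℕ) {s : Finset V} (hs : s ∈ X.faces) (hcard : s.card + j = n + 1) :
    m s = (j.factorial : ℝ) * ∑ σ ∈ X.facets n with s ⊆ σ, m σ := by
  induction j generalizing s with
  | zero =>
    have hself : {σ ∈ X.facets n | s ⊆ σ} = {s} := by
      ext σ
      simp only [mem_filter, mem_facets, mem_singleton]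
      constructor
      · rintro ⟨⟨-, hσ⟩, hsσ⟩
        exact (eq_of_subset_of_card_le hsσ (by omega)).symm
      · rintro rfl
        exact ⟨⟨hs, hcard⟩, subset_rfl⟩
    simp [hself]
  | succ j ih =>
    have hcover : ∀ σ ∈ X.facets n,
        ∑ t ∈ X.faces with s ⊆ t ∧ t.card = s.card + 1, (if t ⊆ σ then m σ else 0) =
          if s ⊆ σ then (j + 1) * m σ else 0 := by
      intro σ hσ
      rw [mem_facets] at hσ
      split_ifs with hsσ
      · rw [← sum_filter, sum_const, card_filter_covers_subset hσ.1 hsσ,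
          show σ.card - s.card = j + 1 by omega, nsmul_eq_mul]
        push_cast; ring
      · refine sum_eq_zero fun t ht => if_neg fun htσ => hsσ ?_
        exact (mem_filter.mp ht).2.1.trans htσ
    calc m s = ∑ t ∈ X.faces with s ⊆ t ∧ t.card = s.card + 1, m t := hm.2 s hs (by omega)
      _ = ∑ t ∈ X.faces with s ⊆ t ∧ t.card = s.card + 1,
            (j.factorial : ℝ) * ∑ σ ∈ X.facets n, (if t ⊆ σ then m σ else 0) := by
          refine sum_congr rfl fun t ht => ?_
          rw [mem_filter] at ht
          rw [ih ht.1 (by omega), sum_filter]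
      _ = (j.factorial : ℝ) * ∑ σ ∈ X.facets n, (if s ⊆ σ then (j + 1) * m σ else 0) := by
          rw [← mul_sum, sum_comm, sum_congr rfl hcover]
      _ = ((j + 1).factorial : ℝ) * ∑ σ ∈ X.facets n with s ⊆ σ, m σ := by
          rw [← sum_filter, ← mul_sum, Nat.factorial_succ]
          push_cast; ring

end Weights

section Laplacian

variable {X} {n : ℕ} {m : Finset V → ℝ}

lemma IsBalanced.wt_const_eq_sum_facets (hm : X.IsBalanced n m) (u : V) :
    X.wt m (const (Fin 1) u) = n.factorial * ∑ σ ∈ X.facets n with u ∈ σ, m σ := by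
  rw [X.wt_const]
  split_ifs with hu
  · rw [hm.eq_factorial_mul_sum_facets n hu (by simp [add_comm])]
    simp
  · refine (mul_eq_zero_of_right _ (sum_eq_zero fun σ hσ => ?_)).symm
    rw [mem_filter] at hσ
    exact absurd (mem_faces_of_mem_facets hσ.1 (singleton_subset_iff.mpr hσ.2)) hu

lemma IsBalanced.mul_wt_cons_const_eq_sum_facets (hn : 0 < n) (hm : X.IsBalanced n m) (u v : V) :
    n * X.wt m (Fin.cons v (const (Fin 1) u) : Fin 2 → V) =
      n.factorial * ∑ σ ∈ X.facets n with u ∈ σ, if v ∈ σ.erase u then m σ else 0 := by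
  rw [X.wt_cons_const]
  split_ifs with h
  · have hcard : ({v, u} : Finset V).card + (n - 1) = n + 1 := by
      rw [card_pair h.1]; omega
    rw [hm.eq_factorial_mul_sum_facets (n - 1) h.2 hcard, ← mul_assoc, ← Nat.cast_mul,
      Nat.mul_factorial_pred hn.ne', sum_filter, sum_filter]
    refine congrArg _ (sum_congr rfl fun σ _ => ?_)
    by_cases huσ : u ∈ σ <;> simp [insert_subset_iff, h.1, huσ]
  · rw [mul_zero, eq_comm]
    refine mul_eq_zero_of_right _ (sum_eq_zero fun σ hσ => if_neg fun hv => h ?_)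
    rw [mem_filter] at hσ
    rw [mem_erase] at hv
    exact ⟨hv.1, mem_faces_of_mem_facets hσ.1 (insert_subset hv.2 (singleton_subset_iff.mpr hσ.2))⟩

lemma wt_mul_lapPlus_const (φ : (Fin 1 → V) → ℝ) {u : V} (hu : X.wt m (const (Fin 1) u) ≠ 0) :
    X.wt m (const (Fin 1) u) * X.lapPlus m 1 φ (const (Fin 1) u) =
      ∑ v, X.wt m (Fin.cons v (const (Fin 1) u) : Fin 2 → V) *
        (φ (const (Fin 1) u) - φ (const (Fin 1) v)) := by
  simp only [lapPlus, deltaOp, dOp_cons_const, mul_sum]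
  exact sum_congr rfl fun v _ => by field_simp

lemma sum_erase_sub_eq {σ : Finset V} {u : V} (hu : u ∈ σ) (f : V → ℝ) :
    ∑ v ∈ σ.erase u, (f u - f v) = σ.card * f u - ∑ v ∈ σ, f v := by
  rw [sum_sub_distrib, sum_const, card_erase_of_mem hu, ← sum_erase_add _ _ hu, nsmul_eq_mul,
    Nat.cast_pred (card_pos.mpr ⟨u, hu⟩)]
  ring

lemma IsBalanced.mul_wt_mul_lapPlus_const (hn : 0 < n) (hm : X.IsBalanced n m)
    (φ : (Fin 1 → V) → ℝ) {u : V} (hu : X.wt m (const (Fin 1) u) ≠ 0) :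
    n * (X.wt m (const (Fin 1) u) * X.lapPlus m 1 φ (const (Fin 1) u)) =
      n.factorial * ∑ σ ∈ X.facets n with u ∈ σ,
        m σ * ((n + 1) * φ (const (Fin 1) u) - ∑ x ∈ σ, φ (const (Fin 1) x)) := by
  set f : V → ℝ := fun v => φ (const (Fin 1) v)
  calc _ = ∑ v, n * X.wt m (Fin.cons v (const (Fin 1) u) : Fin 2 → V) * (f u - f v) := by
        rw [wt_mul_lapPlus_const φ hu, mul_sum]; simp only [mul_assoc, f]
    _ = n.factorial * ∑ σ ∈ X.facets n with u ∈ σ,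
          ∑ v, if v ∈ σ.erase u then m σ * (f u - f v) else 0 := by
        simp only [hm.mul_wt_cons_const_eq_sum_facets hn, mul_assoc, sum_mul, ite_mul, zero_mul,
          ← mul_sum]
        rw [sum_comm]
    _ = _ := by
        refine congrArg _ (sum_congr rfl fun σ hσ => ?_)
        obtain ⟨hσ, huσ⟩ := mem_filter.mp hσ
        rw [sum_ite_mem, univ_inter, ← mul_sum, sum_erase_sub_eq huσ, (X.mem_facets.mp hσ).2]
        push_cast; ring

lemma IsBalanced.wt_mul_eigen_defect (hn : 0 < n) (hm : X.IsBalanced n m)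
    (φ : (Fin 1 → V) → ℝ) (u : V) :
    X.wt m (const (Fin 1) u) *
        ((n + 1) * φ (const (Fin 1) u) - n * X.lapPlus m 1 φ (const (Fin 1) u)) =
      n.factorial * ∑ σ ∈ X.facets n with u ∈ σ, m σ * ∑ x ∈ σ, φ (const (Fin 1) x) := by
  set f : V → ℝ := fun v => φ (const (Fin 1) v)
  by_cases hu : {u} ∈ X.faces
  · have hwt : X.wt m (const (Fin 1) u) ≠ 0 := by
      rw [X.wt_const, if_pos hu]; exact (hm.1 _ hu).ne'
    have hsplit : ∑ σ ∈ X.facets n with u ∈ σ, m σ * ((n + 1) * f u - ∑ x ∈ σ, f x) =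
        (∑ σ ∈ X.facets n with u ∈ σ, m σ) * ((n + 1) * f u) -
          ∑ σ ∈ X.facets n with u ∈ σ, m σ * ∑ x ∈ σ, f x := by
      rw [sum_mul, ← sum_sub_distrib]
      exact sum_congr rfl fun _ _ => by ring
    rw [mul_sub, ← mul_assoc, mul_left_comm, hm.mul_wt_mul_lapPlus_const hn φ hwt,
      hm.wt_const_eq_sum_facets, hsplit]
    ring
  · have hempty : {σ ∈ X.facets n | u ∈ σ} = ∅ :=
      filter_eq_empty_iff.mpr fun σ hσ huσ =>
        hu (mem_faces_of_mem_facets hσ (singleton_subset_iff.mpr huσ))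
    rw [X.wt_const, if_neg hu, hempty]
    simp

lemma IsBalanced.sum_mul_eigen_defect (hn : 0 < n) (hm : X.IsBalanced n m)
    (φ : (Fin 1 → V) → ℝ) :
    ∑ u, φ (const (Fin 1) u) * (X.wt m (const (Fin 1) u) *
        ((n + 1) * φ (const (Fin 1) u) - n * X.lapPlus m 1 φ (const (Fin 1) u))) =
      n.factorial * ∑ σ ∈ X.facets n, m σ * (∑ x ∈ σ, φ (const (Fin 1) x)) ^ 2 := by
  set f : V → ℝ := fun v => φ (const (Fin 1) v)
  calc _ = n.factorial * ∑ u, ∑ σ ∈ X.facets n with u ∈ σ, f u * (m σ * ∑ x ∈ σ, f x) := by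
        simp only [hm.wt_mul_eigen_defect hn, mul_sum, mul_left_comm, f]
    _ = n.factorial * ∑ σ ∈ X.facets n, ∑ u ∈ σ, f u * (m σ * ∑ x ∈ σ, f x) := by
        rw [sum_comm' (t' := X.facets n) (s' := id) fun u σ => by simp [and_comm]]
        rfl
    _ = _ := by
        simp only [← sum_mul]
        exact congrArg _ (sum_congr rfl fun σ _ => by ring)

-- `deltaOp` divides by the weight of the vertex, and `x / 0 = 0`.
lemma lapPlus_const_of_wt_eq_zero (φ : (Fin 1 → V) → ℝ) {u : V}
    (hu : X.wt m (const (Fin 1) u) = 0) : X.lapPlus m 1 φ (const (Fin 1) u) = 0 := by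
  simp [lapPlus, deltaOp, hu]

lemma IsBalanced.lapPlus_eq_smul_iff (hn : 0 < n) (hm : X.IsBalanced n m)
    {φ : (Fin 1 → V) → ℝ} (hφ : X.IsForm 1 φ) :
    X.lapPlus m 1 φ = ((n + 1) / n : ℝ) • φ ↔
      ∀ σ ∈ X.facets n, ∑ x ∈ σ, φ (const (Fin 1) x) = 0 := by
  have hn' : (n : ℝ) ≠ 0 := by exact_mod_cast hn.ne'
  constructor
  · intro heig
    have hdefect : ∀ u,
        (n + 1) * φ (const (Fin 1) u) - n * X.lapPlus m 1 φ (const (Fin 1) u) = 0 := by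
      intro u
      rw [heig, Pi.smul_apply, smul_eq_mul]
      field_simp
      ring
    have hsum := hm.sum_mul_eigen_defect hn φ
    simp only [hdefect, mul_zero, sum_const_zero] at hsum
    have hsq := (sum_eq_zero_iff_of_nonneg fun σ hσ =>
      mul_nonneg (hm.1 σ (X.mem_facets.mp hσ).1).le (sq_nonneg _)).mp
        ((mul_eq_zero.mp hsum.symm).resolve_left (by positivity))
    exact fun σ hσ => pow_eq_zero_iff two_ne_zero |>.mp
      ((mul_eq_zero.mp (hsq σ hσ)).resolve_left (hm.1 σ (X.mem_facets.mp hσ).1).ne')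
  · intro hzero
    refine funext_const fun u => ?_
    rw [Pi.smul_apply, smul_eq_mul]
    by_cases hu : {u} ∈ X.faces
    · have hwt : X.wt m (const (Fin 1) u) ≠ 0 := by
        rw [X.wt_const, if_pos hu]; exact (hm.1 _ hu).ne'
      have hdefect := hm.wt_mul_eigen_defect hn φ u
      rw [sum_eq_zero fun σ hσ => by rw [hzero σ (mem_filter.mp hσ).1, mul_zero], mul_zero,
        mul_eq_zero, or_iff_right hwt, sub_eq_zero] at hdefect
      field_simp
      linarith
    · rw [lapPlus_const_of_wt_eq_zero φ (by rw [X.wt_const, if_neg hu]),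
        (X.isForm_one_iff φ).mp hφ u hu, mul_zero]

end Laplacian

section Links

variable {X}

lemma ext_faces {Y : SComplex V} (h : X.faces = Y.faces) : X = Y := by
  cases X; cases Y; simp_all

lemma mem_link_faces {s : Finset V} (hs : s ∈ X.faces) (t : Finset V) :
    t ∈ (X.link s).faces ↔ Disjoint s t ∧ s ∪ t ∈ X.faces := by
  simp only [link, mem_insert, mem_filter]
  constructor
  · rintro (rfl | ⟨-, h⟩)
    · simpa using hs
    · exact h
  · exact fun h => Or.inr ⟨mem_faces_of_subset h.2 subset_union_right, h⟩

lemma mem_link_singleton_faces {u : V} (hu : {u} ∈ X.faces) (t : Finset V) :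
    t ∈ (X.link {u}).faces ↔ u ∉ t ∧ insert u t ∈ X.faces := by
  rw [mem_link_faces hu, disjoint_singleton_left, insert_eq]

lemma link_empty : X.link ∅ = X :=
  ext_faces <| by ext t; simp [mem_link_faces X.empty_mem]

lemma link_link {s t : Finset V} (hs : s ∈ X.faces) (ht : t ∈ (X.link s).faces) :
    (X.link s).link t = X.link (s ∪ t) := by
  obtain ⟨hst, hst'⟩ := (mem_link_faces hs t).mp ht
  refine ext_faces (Finset.ext fun r => ?_)
  rw [mem_link_faces ht, mem_link_faces hst', mem_link_faces hs, disjoint_union_left,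
    disjoint_union_right, union_assoc]
  tauto

lemma Pure.exists_facet {n : ℕ} (hX : X.Pure n) {s : Finset V} (hs : s ∈ X.faces) :
    ∃ σ ∈ X.facets n, s ⊆ σ := by
  obtain ⟨σ, hσ, hsσ, hcard⟩ := hX.2 s hs
  exact ⟨σ, X.mem_facets.mpr ⟨hσ, hcard⟩, hsσ⟩

lemma Pure.link {n k : ℕ} (hX : X.Pure n) {s : Finset V} (hs : s ∈ X.faces)
    (hk : s.card + k = n) : (X.link s).Pure k := by
  refine ⟨fun t ht => ?_, fun t ht => ?_⟩
  · obtain ⟨hst, hst'⟩ := (mem_link_faces hs t).mp ht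
    have hle := hX.1 _ hst'
    rw [card_union_of_disjoint hst] at hle
    omega
  · obtain ⟨hst, hst'⟩ := (mem_link_faces hs t).mp ht
    obtain ⟨σ, hσ, hsub⟩ := hX.exists_facet hst'
    obtain ⟨hσ, hcard⟩ := X.mem_facets.mp hσ
    refine ⟨σ \ s, (mem_link_faces hs _).mpr ⟨disjoint_sdiff, ?_⟩, ?_, ?_⟩
    · rwa [union_sdiff_of_subset (union_subset_left hsub)]
    · exact subset_sdiff.mpr ⟨union_subset_right hsub, hst.symm⟩
    · rw [card_sdiff_of_subset (union_subset_left hsub)]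
      omega

end Links

section Coloring

variable {X} {n : ℕ} {ι : Type*} [DecidableEq ι] (C : V → ι) {K : Finset ι}

lemma insert_mem_facets_of_mem_link {u : V} (hu : {u} ∈ X.faces) {τ : Finset V}
    (hτ : τ ∈ (X.link {u}).facets n) : u ∉ τ ∧ insert u τ ∈ X.facets (n + 1) := by
  obtain ⟨hτ, hcard⟩ := (X.link {u}).mem_facets.mp hτ
  obtain ⟨huτ, hτ'⟩ := (mem_link_singleton_faces hu τ).mp hτ
  exact ⟨huτ, X.mem_facets.mpr ⟨hτ', by rw [card_insert_of_notMem huτ, hcard]⟩⟩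

lemma image_eq_erase_of_mem_link_facets (hinj : ∀ σ ∈ X.faces, Set.InjOn C σ)
    (hK : ∀ σ ∈ X.facets (n + 1), σ.image C = K) {u : V} (hu : {u} ∈ X.faces) {τ : Finset V}
    (hτ : τ ∈ (X.link {u}).facets n) : τ.image C = K.erase (C u) := by
  obtain ⟨huτ, hτ'⟩ := insert_mem_facets_of_mem_link hu hτ
  have hCu : C u ∉ τ.image C := fun h => by
    obtain ⟨x, hx, hxu⟩ := mem_image.mp h
    exact huτ (hinj _ (X.mem_facets.mp hτ').1 (mem_insert_of_mem hx) (mem_insert_self u τ) hxu ▸ hx)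
  rw [← hK _ hτ', image_insert, erase_insert hCu]

lemma exists_mem_facet_color_eq (hK : ∀ σ ∈ X.facets n, σ.image C = K) {σ τ : Finset V}
    (hσ : σ ∈ X.facets n) (hτ : τ ∈ X.facets n) {x : V} (hx : x ∈ τ) : ∃ z ∈ σ, C z = C x :=
  mem_image.mp (hK σ hσ ▸ hK τ hτ ▸ mem_image_of_mem C hx)

-- The closed stars of adjacent vertices share a facet, which meets every colour class.
lemma eq_of_walk (hX : X.Pure n) (hK : ∀ σ ∈ X.facets n, σ.image C = K) {f : V → ℝ}
    (hloc : ∀ u x y, {u, x} ∈ X.faces → {u, y} ∈ X.faces → C x = C y → f x = f y)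
    {u w : V} (p : X.skeleton.Walk u w) {x y : V} (hx : {u, x} ∈ X.faces)
    (hy : {w, y} ∈ X.faces) (hxy : C x = C y) : f x = f y := by
  induction p generalizing x with
  | nil => exact hloc _ x y hx hy hxy
  | @cons u c w hadj p ih =>
    obtain ⟨σ, hσ, hucσ⟩ := hX.exists_facet hadj.2
    obtain ⟨τ, hτ, hxτ⟩ := hX.exists_facet hx
    obtain ⟨z, hzσ, hz⟩ :=
      exists_mem_facet_color_eq C hK hσ hτ (hxτ (mem_insert_of_mem (mem_singleton_self x)))
    have hstar : ∀ a ∈ σ, {a, z} ∈ X.faces := fun a ha =>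
      mem_faces_of_mem_facets hσ (insert_subset ha (singleton_subset_iff.mpr hzσ))
    exact (hloc u x z hx (hstar u (hucσ (by simp))) hz.symm).trans
      (ih (hstar c (hucσ (by simp))) hy (hz.trans hxy))

lemma link_singleton_skelConnected {u : V} (hu : {u} ∈ X.faces)
    (hconn : ∀ s ∈ X.faces, s.card < n + 1 → (X.link s).SkelConnected) :
    ∀ t ∈ (X.link {u}).faces, t.card < n → ((X.link {u}).link t).SkelConnected := by
  intro t ht htn
  obtain ⟨hut, hut'⟩ := (mem_link_faces hu t).mp ht
  rw [link_link hu ht]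
  exact hconn _ hut' (by rw [card_union_of_disjoint hut, card_singleton]; omega)

lemma sum_link_facet_add_eq_zero {f : V → ℝ} (hf : ∀ σ ∈ X.facets (n + 1), ∑ x ∈ σ, f x = 0)
    {u : V} (hu : {u} ∈ X.faces) {τ : Finset V} (hτ : τ ∈ (X.link {u}).facets n) :
    ∑ z ∈ τ, (f z + f u / (n + 1)) = 0 := by
  obtain ⟨huτ, hτ'⟩ := insert_mem_facets_of_mem_link hu hτ
  have hsum := hf _ hτ'
  rw [sum_insert huτ] at hsum
  rw [sum_add_distrib, sum_const, ((X.link {u}).mem_facets.mp hτ).2, nsmul_eq_mul]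
  field_simp
  push_cast
  linear_combination ((n : ℝ) + 1) * hsum

-- Induction on the dimension: in the link of `u`, the function `f + f u / (n + 1)` again sums
-- to zero over every facet, so `f` is constant on each colour class of the star of `u`.
theorem eq_of_color_eq_of_facet_sums_eq_zero (hX : X.Pure n)
    (hconn : ∀ s ∈ X.faces, s.card < n → (X.link s).SkelConnected)
    (hinj : ∀ σ ∈ X.faces, Set.InjOn C σ) (hK : ∀ σ ∈ X.facets n, σ.image C = K) {f : V → ℝ}
    (hf : ∀ σ ∈ X.facets n, ∑ x ∈ σ, f x = 0) {u v : V} (hu : {u} ∈ X.faces)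
    (hv : {v} ∈ X.faces) (huv : C u = C v) : f u = f v := by
  induction n generalizing X K f u v with
  | zero =>
    have hvertex : ∀ w, {w} ∈ X.faces → f w = 0 := fun w hw => by
      simpa using hf {w} (X.mem_facets.mpr ⟨hw, card_singleton w⟩)
    rw [hvertex u hu, hvertex v hv]
  | succ n ih =>
    have hskel : X.SkelConnected := link_empty (X := X) ▸ hconn ∅ X.empty_mem (by simp)
    refine eq_of_walk C hX hK ?_ (hskel u v hu hv).some (by simpa) (by simpa) huv
    intro w x y hx hy hxy
    have hw : {w} ∈ X.faces := mem_faces_of_subset hx (by simp)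
    have hne : ∀ z, {w, z} ∈ X.faces → C z = C w → z = w := fun z hz hzw =>
      hinj _ hz (by simp) (by simp) hzw
    by_cases hxw : x = w
    · subst hxw; exact congrArg f (hne y hy hxy.symm).symm
    by_cases hyw : y = w
    · subst hyw; exact absurd (hne x hx hxy) hxw
    have hlink : ∀ z, z ≠ w → {w, z} ∈ X.faces → {z} ∈ (X.link {w}).faces := fun z hzw hz =>
      (mem_link_singleton_faces hw _).mpr ⟨by simpa [eq_comm] using hzw, by simpa using hz⟩
    have hshift := ih (hX.link hw (by simp [add_comm])) (link_singleton_skelConnected hw hconn)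
      (fun τ hτ => (hinj _ ((mem_link_singleton_faces hw τ).mp hτ).2).mono (subset_insert w τ))
      (fun τ hτ => image_eq_erase_of_mem_link_facets C hinj hK hw hτ)
      (fun τ hτ => sum_link_facet_add_eq_zero hf hw hτ) (hlink x hxw hx) (hlink y hyw hy) hxy
    simpa using hshift

end Coloring

section Partite

def zeroSumForms (n : ℕ) : Submodule ℝ ((Fin 1 → V) → ℝ) where
  carrier := {φ | X.IsForm 1 φ ∧ ∀ σ ∈ X.facets n, ∑ x ∈ σ, φ (const (Fin 1) x) = 0}
  add_mem' := by
    rintro φ ψ ⟨hφ, hφσ⟩ ⟨hψ, hψσ⟩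
    rw [Set.mem_ofPred_eq, isForm_one_iff] at *
    exact ⟨fun v hv => by simp [hφ v hv, hψ v hv],
      fun σ hσ => by simp [sum_add_distrib, hφσ σ hσ, hψσ σ hσ]⟩
  zero_mem' := ⟨(X.isForm_one_iff 0).mpr fun _ _ => rfl, fun _ _ => by simp⟩
  smul_mem' := by
    rintro c φ ⟨hφ, hφσ⟩
    rw [Set.mem_ofPred_eq, isForm_one_iff] at *
    exact ⟨fun v hv => by simp [hφ v hv], fun σ hσ => by simp [← mul_sum, hφσ σ hσ]⟩

variable {X} {n : ℕ} {m : Finset V → ℝ}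

lemma IsBalanced.eigenset_eq_zeroSumForms (hn : 0 < n) (hm : X.IsBalanced n m) :
    {φ : (Fin 1 → V) → ℝ | X.IsForm 1 φ ∧ X.lapPlus m 1 φ = ((n + 1) / n : ℝ) • φ} =
      X.zeroSumForms n := by
  ext φ
  exact and_congr_right (hm.lapPlus_eq_smul_iff hn)

def sideFunction (X : SComplex V) (S : Fin (n + 1) → Finset V) (i : Fin (n + 1)) :
    (Fin 1 → V) → ℝ :=
  fun u => if u 0 ∈ S i then (n : ℝ) else if ({u 0} : Finset V) ∈ X.faces then -1 else 0

variable {S : Fin (n + 1) → Finset V}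

lemma IsPartition.exists_coloring (hS : X.IsPartition n S) :
    ∃ C : V → Fin (n + 1), ∀ v, {v} ∈ X.faces → ∀ i, v ∈ S i ↔ C v = i := by
  have hcolor : ∀ v, ∃ c : Fin (n + 1), {v} ∈ X.faces → ∀ i, v ∈ S i ↔ c = i := by
    intro v
    by_cases hv : {v} ∈ X.faces
    · obtain ⟨c, hc, huniq⟩ := hS.2.1 v hv
      exact ⟨c, fun _ i => ⟨fun hi => (huniq i hi).symm, fun hi => hi ▸ hc⟩⟩
    · exact ⟨0, fun h => absurd h hv⟩
  choose C hC using hcolor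
  exact ⟨C, hC⟩

variable {C : V → Fin (n + 1)}

lemma IsPartition.injOn_faces (hS : X.IsPartition n S)
    (hC : ∀ v, {v} ∈ X.faces → ∀ i, v ∈ S i ↔ C v = i) : ∀ σ ∈ X.faces, Set.InjOn C σ := by
  intro σ hσ x hx y hy hxy
  by_contra hne
  have hvertex : ∀ z ∈ σ, {z} ∈ X.faces := fun z hz =>
    mem_faces_of_subset hσ (singleton_subset_iff.mpr hz)
  refine hS.2.2 x y hne (mem_faces_of_subset hσ (insert_subset hx (singleton_subset_iff.mpr hy)))
    (C x) ((hC x (hvertex x hx) _).mpr rfl) ((hC y (hvertex y hy) _).mpr hxy.symm)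

lemma IsPartition.image_facet (hS : X.IsPartition n S)
    (hC : ∀ v, {v} ∈ X.faces → ∀ i, v ∈ S i ↔ C v = i) {σ : Finset V} (hσ : σ ∈ X.facets n) :
    σ.image C = univ := by
  obtain ⟨hσ, hcard⟩ := X.mem_facets.mp hσ
  refine eq_univ_of_card _ ?_
  rw [card_image_of_injOn (hS.injOn_faces hC σ hσ), hcard, Fintype.card_fin]

lemma IsPartition.sum_facet_comp (hS : X.IsPartition n S)
    (hC : ∀ v, {v} ∈ X.faces → ∀ i, v ∈ S i ↔ C v = i) {σ : Finset V} (hσ : σ ∈ X.facets n)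
    (g : Fin (n + 1) → ℝ) : ∑ x ∈ σ, g (C x) = ∑ i, g i := by
  rw [← hS.image_facet hC hσ, sum_image (hS.injOn_faces hC σ (X.mem_facets.mp hσ).1)]

lemma IsPartition.sideFunction_const (hS : X.IsPartition n S)
    (hC : ∀ v, {v} ∈ X.faces → ∀ i, v ∈ S i ↔ C v = i) (i : Fin (n + 1)) (v : V) :
    X.sideFunction S i (const (Fin 1) v) =
      if {v} ∈ X.faces then (if C v = i then (n : ℝ) else -1) else 0 := by
  by_cases hv : {v} ∈ X.faces
  · simp [sideFunction, hv, hC v hv i]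
  · have hvS : v ∉ S i := fun h => hv (hS.1 i v h)
    simp [sideFunction, hv, hvS]

lemma IsPartition.sideFunction_mem_zeroSumForms (hS : X.IsPartition n S)
    (hC : ∀ v, {v} ∈ X.faces → ∀ i, v ∈ S i ↔ C v = i) (i : Fin (n + 1)) :
    X.sideFunction S i ∈ X.zeroSumForms n := by
  refine ⟨(X.isForm_one_iff _).mpr fun v hv => by simp [hS.sideFunction_const hC, hv],
    fun σ hσ => ?_⟩
  have hvertex : ∀ x ∈ σ, {x} ∈ X.faces := fun x hx =>
    mem_faces_of_mem_facets hσ (singleton_subset_iff.mpr hx)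
  rw [sum_congr rfl fun x hx => by rw [hS.sideFunction_const hC, if_pos (hvertex x hx)],
    hS.sum_facet_comp hC hσ fun j => if j = i then (n : ℝ) else -1]
  simp [sum_ite, filter_eq', filter_ne', card_erase_of_mem]

lemma IsPartition.span_sideFunction (hX : X.Pure n)
    (hconn : ∀ s ∈ X.faces, s.card < n → (X.link s).SkelConnected) (hS : X.IsPartition n S) :
    Submodule.span ℝ (Set.range (X.sideFunction S)) = X.zeroSumForms n := by
  obtain ⟨C, hC⟩ := hS.exists_coloring
  refine le_antisymm (Submodule.span_le.mpr (Set.range_subset_iff.mpr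
    (hS.sideFunction_mem_zeroSumForms hC))) fun φ ⟨hφ, hφσ⟩ => ?_
  obtain ⟨σ₀, hσ₀, -⟩ := hX.exists_facet X.empty_mem
  have hvertex : ∀ y ∈ σ₀, {y} ∈ X.faces := fun y hy =>
    mem_faces_of_mem_facets hσ₀ (singleton_subset_iff.mpr hy)
  have hrainbow : ∀ i, ∃ x ∈ σ₀, C x = i := fun i =>
    mem_image.mp (hS.image_facet hC hσ₀ ▸ mem_univ i)
  choose x hxσ hxC using hrainbow
  set a : Fin (n + 1) → ℝ := fun i => φ (const (Fin 1) (x i))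
  have hφa : ∀ v, {v} ∈ X.faces → φ (const (Fin 1) v) = a (C v) := fun v hv =>
    eq_of_color_eq_of_facet_sums_eq_zero C hX hconn (hS.injOn_faces hC)
      (fun σ hσ => hS.image_facet hC hσ) hφσ hv (hvertex _ (hxσ (C v))) (hxC (C v)).symm
  have hsum : ∑ i, a i = 0 := by
    rw [← hS.sum_facet_comp hC hσ₀ a, ← hφσ σ₀ hσ₀]
    exact sum_congr rfl fun y hy => (hφa y (hvertex y hy)).symm
  rw [Submodule.mem_span_range_iff_exists_fun]
  refine ⟨fun i => a i / (n + 1), funext_const fun v => ?_⟩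
  simp only [Finset.sum_apply, Pi.smul_apply, smul_eq_mul, hS.sideFunction_const hC]
  by_cases hv : {v} ∈ X.faces
  · have hterm : ∀ i, a i / (n + 1) * (if C v = i then (n : ℝ) else -1) =
        (if C v = i then a i else 0) - a i / (n + 1) := fun i => by
      split_ifs <;> field_simp <;> ring
    simp only [if_pos hv, hterm, sum_sub_distrib, sum_ite_eq, if_pos (mem_univ _), ← sum_div,
      hsum, zero_div, sub_zero, hφa v hv]
  · simp [hv, (X.isForm_one_iff φ).mp hφ v hv]

end Partite

end SComplex

open SComplex
/-- Proposition 5.2: in an `(n+1)`-partite complex, `(n+1)/n` is an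
eigenvalue of `Δ⁺₀` and its eigenspace is spanned by the functions `φ_i` taking the value `n`
on the side `S i` and `-1` on the other vertices. -/
theorem partite_top_eigenvalue_eigenspace
    (X : SComplex V) (n : ℕ) (m : Finset V → ℝ) (S : Fin (n + 1) → Finset V)
    (hn : 0 < n) (hpure : X.Pure n) (hm : X.IsBalanced n m)
    (hpart : X.IsPartition n S) (hconn : X.AllLinksConnected n) :
    ((n : ℝ) + 1) / (n : ℝ) ∈ X.specLapPlus m 1 ∧
      {φ : (Fin 1 → V) → ℝ | X.IsForm 1 φ ∧
          X.lapPlus m 1 φ = (((n : ℝ) + 1) / (n : ℝ)) • φ} =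
        ↑(Submodule.span ℝ (Set.range fun i : Fin (n + 1) =>
          fun u : Fin 1 → V =>
            if u 0 ∈ S i then (n : ℝ)
            else if ({u 0} : Finset V) ∈ X.faces then -1 else 0)) := by
  have heig := hm.eigenset_eq_zeroSumForms hn
  have hspan : Submodule.span ℝ (Set.range (X.sideFunction S)) = X.zeroSumForms n :=
    hpart.span_sideFunction hpure hconn.2
  refine ⟨?_, heig.trans (congrArg _ hspan.symm)⟩
  obtain ⟨C, hC⟩ := hpart.exists_coloring
  obtain ⟨σ, hσ, -⟩ := hpure.exists_facet X.empty_mem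
  obtain ⟨v, hvσ, hv0⟩ := mem_image.mp (hpart.image_facet hC hσ ▸ mem_univ 0)
  have h0 : X.sideFunction S 0 ∈ (X.zeroSumForms n : Set _) :=
    hpart.sideFunction_mem_zeroSumForms hC 0
  rw [← heig] at h0
  refine ⟨_, h0.1, fun h => hn.ne' ?_, h0.2⟩
  have hv := congrFun h (Function.const (Fin 1) v)
  rwa [hpart.sideFunction_const hC,
    if_pos (mem_faces_of_mem_facets hσ (singleton_subset_iff.mpr hvσ)), if_pos hv0,
    Pi.zero_apply, Nat.cast_eq_zero] at hv
end

section
/- Let X be a finite pure n-dimensional weighted simplicial complex with n > 1 such that the 1-skeleton of X and the 1-skeletons of all links of X of dimension > 0 are connected. Fix 0 ≤ k ≤ n−1, and suppose there are κ ≥ λ > k/(k+1) such that ⋃_{τ ∈ Σ(k−1)} Spec(Δ^+_{τ,0}) \ {0} ⊆ [λ, κ]. Then the operator norm of Δ_k^+ + ((λ+κ)/2) Δ_k^− − (k+1)((λ+κ)/2 − k/(k+1)) I on C^k(X,ℝ) is at most (k+1)(κ−λ)/2. -/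
/-!
Garland's method. For an ordered `(k-1)`-simplex `τ`, restrict the `k`-form `φ` to the vertices
`v` of the link of `τ`, `φ_τ(v) = φ(v τ)`; its weighted mean is `δφ(τ)`. The spectral gap of the
link bounds the Dirichlet energy `‖dφ_τ‖²` between `λ` and `κ` times the variance
`‖φ_τ - δφ(τ)‖²`. Summing over `τ`, the balancing condition turns the variances into
`k! ((k+1)‖φ‖² - ‖δφ‖²)` and the energies into `k! (k‖φ‖² + ‖dφ‖²)`, so
`λ ((k+1)‖φ‖² - ‖δφ‖²) ≤ ‖dφ‖² + k‖φ‖² ≤ κ ((k+1)‖φ‖² - ‖δφ‖²)`. With `μ = (λ+κ)/2`, this says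
that the quadratic form of the self-adjoint operator `T = Δ⁺ + μΔ⁻ - (k+1)(μ - k/(k+1))` is at
most `(k+1)(κ-λ)/2 ‖φ‖²` in absolute value, and for a self-adjoint operator this bounds `‖T‖`.

In a link, the spectral theorem is applied to `Δ⁺` conjugated by `√wt` into Euclidean space;
connectivity of the link makes its kernel the constants, to which `φ_τ - δφ(τ)` is orthogonal.
-/

open Finset

variable {V : Type} [Fintype V] [DecidableEq V]

section SymmetricOperator

open scoped RealInnerProductSpace
open Module.End

variable {E : Type*} [NormedAddCommGroup E] [InnerProductSpace ℝ E]

lemma real_inner_self_eq_sum_sq {ι : Type*} [Fintype ι] (b : OrthonormalBasis ι ℝ E) (x : E) :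
    ⟪x, x⟫ = ∑ i, ⟪x, b i⟫ ^ 2 := by
  rw [← b.sum_inner_mul_inner x x]
  exact Finset.sum_congr rfl fun i _ => by rw [real_inner_comm (b i) x, sq]

variable [FiniteDimensional ℝ E] {T : E →ₗ[ℝ] E}

lemma LinearMap.IsSymmetric.inner_map_self_eq_sum (hT : T.IsSymmetric) (x : E) :
    ⟪T x, x⟫ = ∑ i, hT.eigenvalues rfl i * ⟪x, hT.eigenvectorBasis rfl i⟫ ^ 2 := by
  rw [← (hT.eigenvectorBasis rfl).sum_inner_mul_inner (T x) x]
  refine Finset.sum_congr rfl fun i _ => ?_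
  rw [hT x, hT.apply_eigenvectorBasis, real_inner_smul_right, real_inner_comm _ x,
    RCLike.ofReal_real_eq_id, id_eq, sq, mul_assoc]

lemma LinearMap.IsSymmetric.inner_map_self_le (hT : T.IsSymmetric) {κ : ℝ}
    (h : ∀ μ, HasEigenvalue T μ → μ ≤ κ) (x : E) : ⟪T x, x⟫ ≤ κ * ⟪x, x⟫ := by
  rw [hT.inner_map_self_eq_sum, real_inner_self_eq_sum_sq (hT.eigenvectorBasis rfl), Finset.mul_sum]
  exact Finset.sum_le_sum fun i _ =>
    mul_le_mul_of_nonneg_right (h _ (hT.hasEigenvalue_eigenvalues rfl i)) (sq_nonneg _)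

lemma LinearMap.IsSymmetric.le_inner_map_self (hT : T.IsSymmetric) {lam : ℝ}
    (h : ∀ μ, HasEigenvalue T μ → μ ≠ 0 → lam ≤ μ) {x : E} (hx : ∀ y, T y = 0 → ⟪x, y⟫ = 0) :
    lam * ⟪x, x⟫ ≤ ⟪T x, x⟫ := by
  rw [hT.inner_map_self_eq_sum, real_inner_self_eq_sum_sq (hT.eigenvectorBasis rfl), Finset.mul_sum]
  refine Finset.sum_le_sum fun i _ => ?_
  by_cases h0 : hT.eigenvalues rfl i = 0
  · have hker : T (hT.eigenvectorBasis rfl i) = 0 := by simp [h0]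
    simp [hx _ hker]
  · exact mul_le_mul_of_nonneg_right (h _ (hT.hasEigenvalue_eigenvalues rfl i) h0) (sq_nonneg _)

end SymmetricOperator

section AdjointPair

variable {E : Type*} [AddCommGroup E] [Module ℝ E] {B : LinearMap.BilinForm ℝ E}
  {T : Module.End ℝ E}

lemma LinearMap.IsAdjointPair.apply_map_map_le (hT : LinearMap.IsAdjointPair B B T T) {c : ℝ}
    (hc : 0 ≤ c) (h : ∀ x, |B (T x) x| ≤ c * B x x) (x : E) :
    B (T x) (T x) ≤ c ^ 2 * B x x := by
  have hTT : B (T (T x)) x = B (T x) (T x) := hT (T x) x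
  -- add the bounds at `x + t • T x` and `x - t • T x`, then take `t = c⁻¹`
  have key : ∀ t : ℝ, 2 * t * B (T x) (T x) ≤ c * (B x x + t ^ 2 * B (T x) (T x)) := by
    intro t
    have hplus := (abs_le.mp (h (x + t • T x))).2
    have hminus := (abs_le.mp (h (x - t • T x))).1
    simp only [map_add, map_sub, map_smul, LinearMap.add_apply, LinearMap.sub_apply,
      LinearMap.smul_apply, smul_eq_mul, hTT] at hplus hminus
    nlinarith
  rcases hc.eq_or_lt with rfl | hc
  · have := key 1
    simp only [zero_mul, one_pow] at this
    linarith
  · have := key c⁻¹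
    field_simp at this
    nlinarith

end AdjointPair

namespace SComplex

set_option linter.unusedSectionVars false

variable {X : SComplex V} {m : Finset V → ℝ} {i j k n p : ℕ}

section Tuples

lemma sum_comp_perm (π : Equiv.Perm (Fin j)) (F : (Fin j → V) → ℝ) :
    ∑ σ : Fin j → V, F (σ ∘ π) = ∑ σ, F σ :=
  (π.symm.arrowCongr (Equiv.refl V)).sum_comp F

lemma sum_cons (F : (Fin (j + 1) → V) → ℝ) :
    ∑ σ, F σ = ∑ v : V, ∑ τ : Fin j → V, F (Fin.cons v τ) := by
  rw [← Fintype.sum_prod_type']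
  exact ((Fin.consEquiv fun _ => V).sum_comp F).symm

lemma sum_fin_one (F : (Fin 1 → V) → ℝ) : ∑ w, F w = ∑ v : V, F (fun _ => v) :=
  ((Equiv.funUnique (Fin 1) V).symm.sum_comp F).symm

lemma image_comp_perm (σ : Fin j → V) (π : Equiv.Perm (Fin j)) :
    image (σ ∘ π) univ = image σ univ := by
  rw [← image_image, image_univ_equiv]

lemma image_cons (v : V) (τ : Fin j → V) :
    image (Fin.cons v τ : Fin (j + 1) → V) univ = insert v (image τ univ) := by
  apply coe_injective
  simpa only [coe_image, coe_univ, Set.image_univ, coe_insert] using Fin.range_cons v τ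

lemma image_comp_subset (σ : Fin j → V) (f : Fin i → Fin j) :
    image (σ ∘ f) univ ⊆ image σ univ := by
  rw [← image_image]
  exact image_subset_image (subset_univ _)

end Tuples

section OrderedSimplices

lemma isOSimp_iff_card {σ : Fin j → V} :
    X.IsOSimp σ ↔ (image σ univ).card = j ∧ image σ univ ∈ X.faces := by
  rw [IsOSimp, ← Set.injOn_univ, ← coe_univ, ← card_image_iff, card_univ, Fintype.card_fin]

lemma isOSimp_congr {σ σ' : Fin j → V} (h : image σ univ = image σ' univ) :
    X.IsOSimp σ ↔ X.IsOSimp σ' := by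
  rw [isOSimp_iff_card, isOSimp_iff_card, h]

lemma wt_congr {σ σ' : Fin j → V} (h : image σ univ = image σ' univ) :
    X.wt m σ = X.wt m σ' := by
  simp only [wt, isOSimp_congr h, h]

lemma wt_comp_perm (σ : Fin j → V) (π : Equiv.Perm (Fin j)) : X.wt m (σ ∘ π) = X.wt m σ :=
  wt_congr (image_comp_perm σ π)

lemma wt_cons_cons_comm (u v : V) (τ : Fin j → V) :
    X.wt m (Fin.cons u (Fin.cons v τ)) = X.wt m (Fin.cons v (Fin.cons u τ)) :=
  wt_congr (by simp only [image_cons, insert_comm])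

lemma IsOSimp.comp_injective {σ : Fin j → V} (h : X.IsOSimp σ) {f : Fin i → Fin j}
    (hf : Function.Injective f) : X.IsOSimp (σ ∘ f) :=
  ⟨h.1.comp hf, X.down_closed _ h.2 _ (image_comp_subset σ f)⟩

lemma IsOSimp.of_cons {v : V} {τ : Fin j → V} (h : X.IsOSimp (Fin.cons v τ)) : X.IsOSimp τ :=
  h.comp_injective (Fin.succ_injective j)

lemma isOSimp_cons_iff {v : V} {τ : Fin j → V} (hτ : X.IsOSimp τ) :
    X.IsOSimp (Fin.cons v τ) ↔ v ∉ image τ univ ∧ insert v (image τ univ) ∈ X.faces := by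
  simp only [IsOSimp, Fin.cons_injective_iff, image_cons, hτ.1, and_true, mem_image, mem_univ,
    true_and, Set.mem_range]

lemma wt_nonneg (hmp : ∀ s ∈ X.faces, 0 < m s) (σ : Fin j → V) : 0 ≤ X.wt m σ := by
  unfold wt
  split_ifs with h
  exacts [(hmp _ h.2).le, le_rfl]

lemma wt_pos (hmp : ∀ s ∈ X.faces, 0 < m s) {σ : Fin j → V} (h : X.IsOSimp σ) :
    0 < X.wt m σ := by
  rw [wt, if_pos h]
  exact hmp _ h.2

lemma wt_of_not_isOSimp {σ : Fin j → V} (h : ¬X.IsOSimp σ) : X.wt m σ = 0 := if_neg h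

lemma wt_cons_of_not_isOSimp {τ : Fin j → V} (h : ¬X.IsOSimp τ) (v : V) :
    X.wt m (Fin.cons v τ) = 0 :=
  wt_of_not_isOSimp fun hc => h hc.of_cons

lemma sum_wt_cons (hm : X.IsBalanced n m) (hj : j ≤ n) (τ : Fin j → V) :
    ∑ v, X.wt m (Fin.cons v τ) = X.wt m τ := by
  by_cases hτ : ¬X.IsOSimp τ
  · simp [wt_of_not_isOSimp hτ, wt_cons_of_not_isOSimp hτ]
  rw [not_not] at hτ
  set s := image τ univ
  have hcard : s.card = j := (isOSimp_iff_card.mp hτ).1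
  rw [wt, if_pos hτ, hm.2 s hτ.2 (hcard ▸ hj)]
  have hsummand : ∀ v, X.wt m (Fin.cons v τ) =
      if v ∉ s ∧ insert v s ∈ X.faces then m (insert v s) else 0 := fun v => by
    simp only [wt, image_cons, isOSimp_cons_iff hτ, s]
  have hcofaces : X.faces.filter (fun t => s ⊆ t ∧ t.card = s.card + 1) =
      (univ.filter fun v => v ∉ s ∧ insert v s ∈ X.faces).image (insert · s) := by
    ext t
    simp only [mem_filter, mem_image, mem_univ, true_and]
    rw [← exists_eq_insert_iff.trans (and_congr_right' eq_comm)]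
    grind
  rw [hcofaces, sum_image fun v hv w _ h => (insert_inj (mem_filter.mp hv).2.1).mp h]
  simp_rw [hsummand, sum_filter]

end OrderedSimplices

section Antisymmetry

variable (V) in
def antisymm (j : ℕ) : Submodule ℝ ((Fin j → V) → ℝ) where
  carrier := {φ | ∀ (σ : Fin j → V) (π : Equiv.Perm (Fin j)),
    φ (σ ∘ π) = ((Equiv.Perm.sign π : ℤ) : ℝ) * φ σ}
  add_mem' hφ hψ σ π := by simp only [Pi.add_apply, hφ σ π, hψ σ π, mul_add]
  zero_mem' σ π := by simp
  smul_mem' c φ hφ σ π := by simp only [Pi.smul_apply, smul_eq_mul, hφ σ π]; ring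

lemma mem_antisymm_one (φ : (Fin 1 → V) → ℝ) : φ ∈ antisymm V 1 := fun σ π => by
  simp [Subsingleton.elim π 1]

lemma mem_antisymm_of_adjacent_swap {φ : (Fin (j + 1) → V) → ℝ}
    (h : ∀ (σ : Fin (j + 1) → V) (t : Fin j), φ (σ ∘ Equiv.swap t.castSucc t.succ) = -φ σ) :
    φ ∈ antisymm V (j + 1) := by
  intro σ π
  have hπ : π ∈ Submonoid.closure (Set.range fun t : Fin j => Equiv.swap t.castSucc t.succ) := by
    rw [Equiv.Perm.mclosure_swap_castSucc_succ]
    trivial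
  induction hπ using Submonoid.closure_induction generalizing σ with
  | mem _ hs =>
    obtain ⟨t, rfl⟩ := hs
    simp [h σ t, Equiv.Perm.sign_swap (Fin.castSucc_lt_succ (i := t)).ne]
  | one => simp
  | mul a b _ _ iha ihb =>
    rw [Equiv.Perm.coe_mul, ← Function.comp_assoc, ihb, iha, map_mul]
    push_cast
    ring

lemma val_swap_apply {q : ℕ} (a b x : Fin q) :
    (Equiv.swap a b x : ℕ) =
      if (x : ℕ) = (a : ℕ) then (b : ℕ) else if (x : ℕ) = (b : ℕ) then (a : ℕ) else (x : ℕ) := by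
  simp only [Equiv.swap_apply_def, Fin.ext_iff]
  split_ifs <;> rfl

lemma val_succAbove (q : Fin (j + 1)) (x : Fin j) :
    (q.succAbove x : ℕ) = if (x : ℕ) < (q : ℕ) then (x : ℕ) else (x : ℕ) + 1 := by
  rw [Fin.succAbove]
  split_ifs <;> simp_all [Fin.lt_def]

lemma swap_comp_succAbove_castSucc (t : Fin (j + 1)) :
    Equiv.swap t.castSucc t.succ ∘ t.castSucc.succAbove = t.succ.succAbove := by
  funext x
  apply Fin.ext
  simp only [Function.comp_apply, val_swap_apply, val_succAbove, Fin.val_castSucc, Fin.val_succ]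
  split_ifs <;> omega

lemma swap_comp_succAbove_succ (t : Fin (j + 1)) :
    Equiv.swap t.castSucc t.succ ∘ t.succ.succAbove = t.castSucc.succAbove := by
  funext x
  apply Fin.ext
  simp only [Function.comp_apply, val_swap_apply, val_succAbove, Fin.val_castSucc, Fin.val_succ]
  split_ifs <;> omega

lemma exists_swap_comp_succAbove (t : Fin (j + 1)) {q : Fin (j + 2)} (h₁ : q ≠ t.castSucc)
    (h₂ : q ≠ t.succ) : ∃ t' : Fin j, Equiv.swap t.castSucc t.succ ∘ q.succAbove =
      q.succAbove ∘ Equiv.swap t'.castSucc t'.succ := by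
  have h₁ : (q : ℕ) ≠ t := fun h => h₁ (Fin.ext h)
  have h₂ : (q : ℕ) ≠ t + 1 := fun h => h₂ (Fin.ext h)
  have ht := t.isLt
  have hq := q.isLt
  rcases lt_or_gt_of_ne h₁ with hlt | hgt
  · refine ⟨⟨t - 1, by omega⟩, ?_⟩
    funext x
    apply Fin.ext
    simp only [Function.comp_apply, val_swap_apply, val_succAbove, Fin.val_castSucc, Fin.val_succ]
    split_ifs <;> omega
  · refine ⟨⟨t, by omega⟩, ?_⟩
    funext x
    apply Fin.ext
    simp only [Function.comp_apply, val_swap_apply, val_succAbove, Fin.val_castSucc, Fin.val_succ]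
    split_ifs <;> omega

lemma dOp_mem_antisymm {φ : (Fin j → V) → ℝ} (hφ : φ ∈ antisymm V j) :
    dOp φ ∈ antisymm V (j + 1) := by
  rcases j with _ | j
  · exact mem_antisymm_one _
  refine mem_antisymm_of_adjacent_swap fun σ t => ?_
  set s := Equiv.swap t.castSucc t.succ
  -- `s` either exchanges the faces opposite `t` and `t + 1`, or acts inside the face opposite `q`
  have hterm : ∀ q : Fin (j + 2), (-1 : ℝ) ^ (q : ℕ) * φ ((σ ∘ s) ∘ q.succAbove) =
      -((-1 : ℝ) ^ (s q : ℕ) * φ (σ ∘ (s q).succAbove)) := by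
    intro q
    rw [Function.comp_assoc]
    by_cases h₁ : q = t.castSucc
    · subst h₁
      simp [s, swap_comp_succAbove_castSucc, pow_succ]
    by_cases h₂ : q = t.succ
    · subst h₂
      simp [s, swap_comp_succAbove_succ, pow_succ]
    obtain ⟨t', ht'⟩ := exists_swap_comp_succAbove t h₁ h₂
    rw [ht', Equiv.swap_apply_of_ne_of_ne h₁ h₂, ← Function.comp_assoc,
      hφ _ (Equiv.swap t'.castSucc t'.succ), Equiv.Perm.sign_swap (Fin.castSucc_lt_succ).ne]
    simp
  simp only [dOp]
  rw [Finset.sum_congr rfl fun q _ => hterm q, Finset.sum_neg_distrib,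
    Equiv.sum_comp s fun q => (-1 : ℝ) ^ (q : ℕ) * φ (σ ∘ q.succAbove)]

lemma cons_comp_perm (v : V) (τ : Fin j → V) (π : Equiv.Perm (Fin j)) :
    (Fin.cons v (τ ∘ π) : Fin (j + 1) → V) =
      Fin.cons v τ ∘ Equiv.Perm.decomposeFin.symm (0, π) := by
  funext x
  cases x using Fin.cases <;>
    simp [Equiv.Perm.decomposeFin_symm_apply_zero, Equiv.Perm.decomposeFin_symm_apply_succ]

lemma deltaOp_mem_antisymm {φ : (Fin (j + 1) → V) → ℝ} (hφ : φ ∈ antisymm V (j + 1)) :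
    X.deltaOp m φ ∈ antisymm V j := by
  intro τ π
  simp only [deltaOp, Finset.mul_sum, cons_comp_perm, wt_comp_perm,
    hφ _ (Equiv.Perm.decomposeFin.symm _), Equiv.Perm.decomposeFin.symm_sign]
  refine Finset.sum_congr rfl fun v _ => ?_
  rw [if_pos trivial, one_mul]
  ring

end Antisymmetry

section InnerProduct

lemma innerF_comm (φ ψ : (Fin j → V) → ℝ) : X.innerF m j φ ψ = X.innerF m j ψ φ := by
  simp only [innerF, mul_comm (φ _)]

variable (X m j) in
noncomputable def innerBilin : LinearMap.BilinForm ℝ ((Fin j → V) → ℝ) :=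
  LinearMap.mk₂ ℝ (X.innerF m j)
    (fun φ φ' ψ => by simp only [innerF, Pi.add_apply, add_mul, mul_add, sum_add_distrib])
    (fun c φ ψ => by
      simp only [innerF, Pi.smul_apply, smul_eq_mul, mul_sum]
      exact sum_congr rfl fun _ _ => by ring)
    (fun φ ψ ψ' => by simp only [innerF, Pi.add_apply, mul_add, sum_add_distrib])
    (fun c φ ψ => by
      simp only [innerF, Pi.smul_apply, smul_eq_mul, mul_sum]
      exact sum_congr rfl fun _ _ => by ring)

@[simp]
lemma innerBilin_apply (φ ψ : (Fin j → V) → ℝ) : X.innerBilin m j φ ψ = X.innerF m j φ ψ := rfl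

lemma innerF_eq_sum_div (φ ψ : (Fin j → V) → ℝ) :
    X.innerF m j φ ψ = (∑ σ, X.wt m σ * (φ σ * ψ σ)) / j.factorial := by
  simp only [innerF, sum_div]
  exact sum_congr rfl fun σ _ => by ring

lemma innerF_self_nonneg (hmp : ∀ s ∈ X.faces, 0 < m s) (φ : (Fin j → V) → ℝ) :
    0 ≤ X.innerF m j φ φ :=
  sum_nonneg fun σ _ => mul_nonneg (div_nonneg (wt_nonneg hmp σ) (Nat.cast_nonneg _))
    (mul_self_nonneg _)

lemma innerF_congr_right (φ : (Fin j → V) → ℝ) {ψ ψ' : (Fin j → V) → ℝ}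
    (h : ∀ σ, X.IsOSimp σ → ψ σ = ψ' σ) : X.innerF m j φ ψ = X.innerF m j φ ψ' := by
  refine sum_congr rfl fun σ _ => ?_
  by_cases hσ : X.IsOSimp σ
  · rw [h σ hσ]
  · simp [wt_of_not_isOSimp hσ]

lemma eq_zero_of_innerF_self_eq_zero (hmp : ∀ s ∈ X.faces, 0 < m s) {ψ : (Fin j → V) → ℝ}
    (h : X.innerF m j ψ ψ = 0) {σ : Fin j → V} (hσ : X.IsOSimp σ) : ψ σ = 0 := by
  have hterm := (sum_eq_zero_iff_of_nonneg fun σ _ => mul_nonneg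
    (div_nonneg (wt_nonneg hmp σ) (Nat.cast_nonneg _)) (mul_self_nonneg (ψ σ))).mp h σ
      (mem_univ σ)
  have hwt : X.wt m σ / j.factorial ≠ 0 := (div_pos (wt_pos hmp hσ) (by positivity)).ne'
  exact mul_self_eq_zero.mp ((mul_eq_zero.mp hterm).resolve_left hwt)

end InnerProduct

section Operators

variable (V j) in
def dLin : ((Fin j → V) → ℝ) →ₗ[ℝ] ((Fin (j + 1) → V) → ℝ) where
  toFun := dOp
  map_add' φ ψ := by funext σ; simp only [dOp, Pi.add_apply, mul_add, sum_add_distrib]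
  map_smul' c φ := by
    funext σ
    simp only [dOp, Pi.smul_apply, smul_eq_mul, RingHom.id_apply, mul_sum]
    exact sum_congr rfl fun _ _ => by ring

variable (X m j) in
noncomputable def deltaLin : ((Fin (j + 1) → V) → ℝ) →ₗ[ℝ] ((Fin j → V) → ℝ) where
  toFun := X.deltaOp m
  map_add' φ ψ := by funext τ; simp only [deltaOp, Pi.add_apply, mul_add, sum_add_distrib]
  map_smul' c φ := by
    funext τ
    simp only [deltaOp, Pi.smul_apply, smul_eq_mul, RingHom.id_apply, mul_sum]
    exact sum_congr rfl fun _ _ => by ring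

lemma deltaOp_of_not_isOSimp (φ : (Fin (j + 1) → V) → ℝ) {τ : Fin j → V} (hτ : ¬X.IsOSimp τ) :
    X.deltaOp m φ τ = 0 :=
  sum_eq_zero fun v _ => by rw [wt_cons_of_not_isOSimp hτ, zero_div, zero_mul]

lemma dOp_fin_one (g : (Fin 1 → V) → ℝ) (u v : V) :
    dOp g (Fin.cons u fun _ => v) = g (fun _ => v) - g (fun _ => u) := by
  have hsucc : (Fin.cons u fun _ => v : Fin 2 → V) ∘ (1 : Fin 2).succAbove = fun _ => u := by
    funext x
    rw [Subsingleton.elim x 0]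
    rfl
  simp only [dOp, Fin.sum_univ_succ, Fin.sum_univ_zero, Fin.val_zero, Fin.val_succ, pow_zero,
    Fin.succAbove_zero, Fin.cons_comp_succ, Fin.succ_zero_eq_one, hsucc]
  ring

end Operators

section Adjointness

lemma sum_mul_comp_succAbove {W : (Fin (j + 1) → V) → ℝ} 
    (hW : ∀ σ (π : Equiv.Perm (Fin (j + 1))), W (σ ∘ π) = W σ)
    {χ : (Fin (j + 1) → V) → ℝ} (hχ : χ ∈ antisymm V (j + 1)) (ψ : (Fin j → V) → ℝ)
    (q : Fin (j + 1)) :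
    ∑ σ, W σ * χ σ * ((-1) ^ (q : ℕ) * ψ (σ ∘ q.succAbove)) =
      ∑ σ, W σ * χ σ * ψ (σ ∘ Fin.succ) := by
  rw [← sum_comp_perm q.cycleRange]
  refine sum_congr rfl fun σ _ => ?_
  have hcomp : (σ ∘ q.cycleRange) ∘ q.succAbove = σ ∘ Fin.succ := by
    funext x
    simp [Fin.cycleRange_succAbove]
  have hsign : ((-1 : ℝ) ^ (q : ℕ)) * (-1) ^ (q : ℕ) = 1 := by rw [← mul_pow]; norm_num
  rw [hcomp, hW, hχ, Fin.sign_cycleRange]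
  push_cast
  linear_combination (W σ * χ σ * ψ (σ ∘ Fin.succ)) * hsign

lemma sum_mul_dOp {W : (Fin (j + 1) → V) → ℝ} 
    (hW : ∀ σ (π : Equiv.Perm (Fin (j + 1))), W (σ ∘ π) = W σ)
    {χ : (Fin (j + 1) → V) → ℝ} (hχ : χ ∈ antisymm V (j + 1)) (ψ : (Fin j → V) → ℝ) :
    ∑ σ, W σ * χ σ * dOp ψ σ = (j + 1) * ∑ σ, W σ * χ σ * ψ (σ ∘ Fin.succ) := by
  conv_lhs => simp only [dOp, mul_sum]
  rw [sum_comm]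
  simp only [sum_mul_comp_succAbove hW hχ, sum_const, card_univ, Fintype.card_fin, nsmul_eq_mul]
  push_cast
  ring

lemma wt_mul_deltaOp (hmp : ∀ s ∈ X.faces, 0 < m s) (φ : (Fin (j + 1) → V) → ℝ)
    (τ : Fin j → V) :
    X.wt m τ * X.deltaOp m φ τ = ∑ v, X.wt m (Fin.cons v τ) * φ (Fin.cons v τ) := by
  by_cases hτ : X.IsOSimp τ
  · simp only [deltaOp, mul_sum]
    refine sum_congr rfl fun v _ => ?_
    field_simp [(wt_pos hmp hτ).ne']
  · simp [wt_of_not_isOSimp hτ, wt_cons_of_not_isOSimp hτ]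

lemma innerF_deltaOp_left (hmp : ∀ s ∈ X.faces, 0 < m s) {φ : (Fin (j + 1) → V) → ℝ}
    (hφ : φ ∈ antisymm V (j + 1)) (ψ : (Fin j → V) → ℝ) :
    X.innerF m j (X.deltaOp m φ) ψ = X.innerF m (j + 1) φ (dOp ψ) := by
  have hsum : ∑ τ, X.wt m τ * (X.deltaOp m φ τ * ψ τ) =
      ∑ σ, X.wt m σ * φ σ * ψ (σ ∘ Fin.succ) := by
    simp only [← mul_assoc, wt_mul_deltaOp hmp, sum_mul]
    rw [sum_cons fun σ => X.wt m σ * φ σ * ψ (σ ∘ Fin.succ), sum_comm]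
    rfl
  have hd := sum_mul_dOp (fun σ π => wt_comp_perm (X := X) (m := m) σ π) hφ ψ
  simp only [mul_assoc] at hd
  rw [innerF_eq_sum_div, innerF_eq_sum_div, hsum, hd, Nat.factorial_succ]
  push_cast
  field_simp

lemma innerF_dOp_left (hmp : ∀ s ∈ X.faces, 0 < m s) (φ : (Fin j → V) → ℝ)
    {ψ : (Fin (j + 1) → V) → ℝ} (hψ : ψ ∈ antisymm V (j + 1)) :
    X.innerF m (j + 1) (dOp φ) ψ = X.innerF m j φ (X.deltaOp m ψ) := by
  rw [innerF_comm, ← innerF_deltaOp_left hmp hψ, innerF_comm]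

end Adjointness

section CoboundaryIdentity

lemma dOp_cons (φ : (Fin (j + 1) → V) → ℝ) (u : V) (σ : Fin (j + 1) → V) :
    dOp φ (Fin.cons u σ) = φ σ - dOp (fun τ => φ (Fin.cons u τ)) σ := by
  simp only [dOp, Fin.sum_univ_succ (n := j + 1), Fin.val_zero, pow_zero, one_mul,
    Fin.succAbove_zero, Fin.cons_comp_succ, Fin.cons_comp_succ_succAbove, Fin.val_succ, pow_succ,
    sub_eq_add_neg, ← sum_neg_distrib]
  have hremove : ∀ q : Fin (j + 1), q.removeNth σ = σ ∘ q.succAbove := fun _ => rfl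
  simp only [hremove]
  congr 1
  exact sum_congr rfl fun q _ => by ring

lemma wt_cons_comp_perm (u : V) (σ : Fin j → V) (π : Equiv.Perm (Fin j)) :
    X.wt m (Fin.cons u (σ ∘ π)) = X.wt m (Fin.cons u σ) :=
  wt_congr (by rw [image_cons, image_cons, image_comp_perm])

lemma sum_wt_mul_dOp_sq {φ : (Fin (j + 1) → V) → ℝ} (hφ : φ ∈ antisymm V (j + 1)) :
    ∑ ρ, X.wt m ρ * (dOp φ ρ * dOp φ ρ) =
      (j + 2) * (∑ u, ∑ σ, X.wt m (Fin.cons u σ) * φ σ ^ 2 -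
        (j + 1) * ∑ u, ∑ σ, X.wt m (Fin.cons u σ) * φ σ * φ (Fin.cons u (σ ∘ Fin.succ))) := by
  -- symmetrize one factor `dφ` over the removed vertex, then split the other at the first vertex
  have hsym :=
    sum_mul_dOp (fun σ π => wt_comp_perm (X := X) (m := m) σ π) (dOp_mem_antisymm hφ) φ
  have hcone : ∀ u, ∑ σ, X.wt m (Fin.cons u σ) * φ σ * dOp (fun τ => φ (Fin.cons u τ)) σ =
      (j + 1) * ∑ σ, X.wt m (Fin.cons u σ) * φ σ * φ (Fin.cons u (σ ∘ Fin.succ)) :=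
    fun u => sum_mul_dOp (wt_cons_comp_perm u) hφ _
  have hsplit : ∀ u σ, X.wt m (Fin.cons u σ) * dOp φ (Fin.cons u σ) * φ σ =
      X.wt m (Fin.cons u σ) * φ σ ^ 2 -
        X.wt m (Fin.cons u σ) * φ σ * dOp (fun τ => φ (Fin.cons u τ)) σ := fun u σ => by
    rw [dOp_cons]
    ring
  simp only [← mul_assoc]
  rw [hsym, sum_cons]
  simp only [Fin.cons_comp_succ, hsplit, sum_sub_distrib, hcone, ← mul_sum]
  push_cast
  ring

end CoboundaryIdentity

section Localization

/- Write `φ_τ := φ (· :: τ)` for the restriction of `φ` to the vertices of the link of `τ`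
(unlike `localize`, which appends the vertex, this matches `deltaOp`). In the link, `localNormSq`,
`localEnergy` and `localVariance` are `‖φ_τ‖²`, `‖dφ_τ‖²` and `‖φ_τ - δφ(τ)‖²`: the link has
total mass `wt τ`, and `δφ(τ)` is the mean of `φ_τ`. -/

variable (X m) in
noncomputable def localNormSq (φ : (Fin (k + 1) → V) → ℝ) (τ : Fin k → V) : ℝ :=
  ∑ v, X.wt m (Fin.cons v τ) * φ (Fin.cons v τ) ^ 2

variable (X m) in
noncomputable def localEnergy (φ : (Fin (k + 1) → V) → ℝ) (τ : Fin k → V) : ℝ :=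
  ∑ u, ∑ v, X.wt m (Fin.cons u (Fin.cons v τ)) / 2 * (φ (Fin.cons v τ) - φ (Fin.cons u τ)) ^ 2

variable (X m) in
noncomputable def localVariance (φ : (Fin (k + 1) → V) → ℝ) (τ : Fin k → V) : ℝ :=
  X.localNormSq m φ τ - X.wt m τ * X.deltaOp m φ τ ^ 2

lemma sum_localNormSq (φ : (Fin (k + 1) → V) → ℝ) :
    ∑ τ, X.localNormSq m φ τ = (k + 1).factorial * X.innerF m (k + 1) φ φ := by
  rw [innerF_eq_sum_div, mul_div_cancel₀ _ (by positivity), sum_cons, sum_comm]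
  simp only [localNormSq, sq]

lemma localEnergy_eq (φ : (Fin (k + 1) → V) → ℝ) (τ : Fin k → V) :
    X.localEnergy m φ τ = ∑ u, ∑ v, X.wt m (Fin.cons u (Fin.cons v τ)) *
      (φ (Fin.cons v τ) ^ 2 - φ (Fin.cons u τ) * φ (Fin.cons v τ)) := by
  have hswap : ∑ u, ∑ v, X.wt m (Fin.cons u (Fin.cons v τ)) * φ (Fin.cons u τ) ^ 2 =
      ∑ u, ∑ v, X.wt m (Fin.cons u (Fin.cons v τ)) * φ (Fin.cons v τ) ^ 2 := by
    rw [sum_comm]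
    simp only [wt_cons_cons_comm]
  rw [localEnergy, ← sub_eq_zero, ← sum_sub_distrib]
  simp only [← sum_sub_distrib]
  have hdiff : ∀ u v, X.wt m (Fin.cons u (Fin.cons v τ)) / 2 *
        (φ (Fin.cons v τ) - φ (Fin.cons u τ)) ^ 2 - X.wt m (Fin.cons u (Fin.cons v τ)) *
        (φ (Fin.cons v τ) ^ 2 - φ (Fin.cons u τ) * φ (Fin.cons v τ)) =
      (X.wt m (Fin.cons u (Fin.cons v τ)) * φ (Fin.cons u τ) ^ 2 -
        X.wt m (Fin.cons u (Fin.cons v τ)) * φ (Fin.cons v τ) ^ 2) / 2 := fun u v => by ring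
  simp only [hdiff, ← sum_div, sum_sub_distrib, hswap, sub_self, zero_div]

lemma sum_wt_cons_mul (hm : X.IsBalanced n m) (hj : j ≤ n) (F : (Fin j → V) → ℝ) :
    ∑ u, ∑ σ, X.wt m (Fin.cons u σ) * F σ = ∑ σ, X.wt m σ * F σ := by
  rw [sum_comm]
  simp only [← sum_mul, sum_wt_cons hm hj]

lemma sum_sum_sum_cons (F : V → (Fin (k + 1) → V) → ℝ) :
    ∑ τ : Fin k → V, ∑ u, ∑ v, F u (Fin.cons v τ) = ∑ u, ∑ σ, F u σ := by
  rw [sum_comm]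
  exact sum_congr rfl fun u _ => by rw [sum_comm, sum_cons]

lemma sum_localEnergy (hm : X.IsBalanced n m) (hk : k + 1 ≤ n) {φ : (Fin (k + 1) → V) → ℝ}
    (hφ : φ ∈ antisymm V (k + 1)) :
    ∑ τ, X.localEnergy m φ τ = k.factorial *
      (k * X.innerF m (k + 1) φ φ + X.innerF m (k + 2) (dOp φ) (dOp φ)) := by
  set P := ∑ u, ∑ σ, X.wt m (Fin.cons u σ) * φ σ ^ 2 with hPdef
  set Q := ∑ u, ∑ σ, X.wt m (Fin.cons u σ) * φ σ * φ (Fin.cons u (σ ∘ Fin.succ)) with hQdef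
  have hP : P = (k + 1) * k.factorial * X.innerF m (k + 1) φ φ := by
    rw [hPdef, sum_wt_cons_mul hm hk, innerF_eq_sum_div, Nat.factorial_succ]
    push_cast
    field_simp
  have hD : (k + 2) * (k + 1) * k.factorial * X.innerF m (k + 2) (dOp φ) (dOp φ) =
      (k + 2) * (P - (k + 1) * Q) := by
    rw [← sum_wt_mul_dOp_sq hφ, innerF_eq_sum_div, Nat.factorial_succ, Nat.factorial_succ]
    push_cast
    field_simp
    ring
  have hE : ∑ τ, X.localEnergy m φ τ = P - Q := by
    rw [hPdef, hQdef, ← sum_sub_distrib]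
    simp only [← sum_sub_distrib]
    rw [← sum_sum_sum_cons]
    simp only [localEnergy_eq, Fin.cons_comp_succ, mul_sub]
    exact sum_congr rfl fun τ _ => sum_congr rfl fun u _ => sum_congr rfl fun v _ => by ring
  have hk₁ : (k + 1 : ℝ) ≠ 0 := by positivity
  have hk₂ : (k + 2 : ℝ) ≠ 0 := by positivity
  rw [hE]
  apply mul_left_cancel₀ (mul_ne_zero hk₂ hk₁)
  linear_combination ((k : ℝ) + 2) * k * hP - hD

lemma sum_localVariance (φ : (Fin (k + 1) → V) → ℝ) :
    ∑ τ, X.localVariance m φ τ = k.factorial *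
      ((k + 1) * X.innerF m (k + 1) φ φ - X.innerF m k (X.deltaOp m φ) (X.deltaOp m φ)) := by
  simp only [localVariance, sum_sub_distrib, sum_localNormSq]
  rw [innerF_eq_sum_div (j := k) (X.deltaOp m φ), Nat.factorial_succ]
  push_cast
  field_simp

end Localization

section Link

lemma linkWt_pos (hmp : ∀ s ∈ X.faces, 0 < m s) {s : Finset V} (hs : s ∈ X.faces) :
    ∀ t ∈ (X.link s).faces, 0 < linkWt m s t := by
  intro t ht
  rcases mem_insert.mp ht with rfl | ht
  · simpa [linkWt] using hmp s hs
  · exact hmp _ (mem_filter.mp ht).2.2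

lemma link_isOSimp_iff {τ : Fin k → V} (hτ : X.IsOSimp τ) {w : Fin i → V} {ρ : Fin p → V}
    (hp : p = i + k) (hρ : image ρ univ = image w univ ∪ image τ univ) :
    (X.link (image τ univ)).IsOSimp w ↔ X.IsOSimp ρ := by
  obtain ⟨hs, hsX⟩ := isOSimp_iff_card.mp hτ
  rw [isOSimp_iff_card, isOSimp_iff_card, hρ]
  set A := image w univ
  set s := image τ univ
  have hA : A.card ≤ i := card_image_le.trans (by simp)
  have hunion := card_union_add_card_inter A s
  simp only [link, mem_insert, mem_filter]
  constructor
  · rintro ⟨hAi, hA0 | ⟨-, hdisj, hsA⟩⟩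
    · rw [hA0, card_empty] at hAi
      rw [hA0, empty_union]
      exact ⟨by omega, hsX⟩
    · rw [union_comm]
      refine ⟨?_, hsA⟩
      rw [card_union_of_disjoint hdisj]
      omega
  · rintro ⟨hcard, hAs⟩
    have hinter : (A ∩ s).card = 0 := by omega
    refine ⟨by omega, Or.inr ⟨X.down_closed _ hAs _ subset_union_left, ?_, union_comm s A ▸ hAs⟩⟩
    rw [disjoint_iff_inter_eq_empty, inter_comm, ← card_eq_zero, hinter]

lemma link_wt_eq {τ : Fin k → V} (hτ : X.IsOSimp τ) {w : Fin i → V} {ρ : Fin p → V}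
    (hp : p = i + k) (hρ : image ρ univ = image w univ ∪ image τ univ) :
    (X.link (image τ univ)).wt (linkWt m (image τ univ)) w = X.wt m ρ := by
  simp only [wt, link_isOSimp_iff hτ hp hρ, linkWt, hρ, union_comm]

lemma image_const_one (v : V) : image (fun _ : Fin 1 => v) univ = {v} := by simp

lemma link_isOSimp_vertex_iff {τ : Fin k → V} (hτ : X.IsOSimp τ) (v : V) :
    (X.link (image τ univ)).IsOSimp (fun _ : Fin 1 => v) ↔ X.IsOSimp (Fin.cons v τ) :=
  link_isOSimp_iff hτ (add_comm k 1) (by rw [image_cons, image_const_one, ← insert_eq])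

lemma link_innerF_one {τ : Fin k → V} (hτ : X.IsOSimp τ) (g g' : (Fin 1 → V) → ℝ) :
    (X.link (image τ univ)).innerF (linkWt m (image τ univ)) 1 g g' =
      ∑ v, X.wt m (Fin.cons v τ) * (g (fun _ => v) * g' (fun _ => v)) := by
  rw [innerF, sum_fin_one]
  refine sum_congr rfl fun v _ => ?_
  rw [link_wt_eq (ρ := Fin.cons v τ) hτ (add_comm k 1)
    (by rw [image_cons, image_const_one, ← insert_eq])]
  simp

lemma link_innerF_two {τ : Fin k → V} (hτ : X.IsOSimp τ) (g g' : (Fin 2 → V) → ℝ) :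
    (X.link (image τ univ)).innerF (linkWt m (image τ univ)) 2 g g' =
      ∑ u, ∑ v, X.wt m (Fin.cons u (Fin.cons v τ)) / 2 *
        (g (Fin.cons u fun _ => v) * g' (Fin.cons u fun _ => v)) := by
  rw [innerF, sum_cons]
  refine sum_congr rfl fun u _ => ?_
  rw [sum_fin_one]
  refine sum_congr rfl fun v _ => ?_
  rw [link_wt_eq (ρ := Fin.cons u (Fin.cons v τ)) hτ (by omega)
    (by rw [image_cons, image_cons, image_cons, image_const_one, insert_union, ← insert_eq])]
  simp

end Link

section VertexSpectrum

open scoped RealInnerProductSpace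
open Module.End

variable {Y : SComplex V} {mY : Finset V → ℝ}

variable (Y mY) in
noncomputable def toEuclid : ((Fin 1 → V) → ℝ) →ₗ[ℝ] EuclideanSpace ℝ (Fin 1 → V) where
  toFun f := WithLp.toLp 2 fun w => √(Y.wt mY w) * f w
  map_add' f g := by ext w; simp [mul_add]
  map_smul' c f := by
    ext w
    simp only [Pi.smul_apply, smul_eq_mul, RingHom.id_apply, PiLp.smul_apply]
    ring

variable (Y mY) in
noncomputable def ofEuclid : EuclideanSpace ℝ (Fin 1 → V) →ₗ[ℝ] ((Fin 1 → V) → ℝ) where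
  toFun u w := if Y.IsOSimp w then u w / √(Y.wt mY w) else 0
  map_add' u u' := by funext w; split_ifs <;> simp [add_div, *]
  map_smul' c u := by funext w; split_ifs <;> simp [mul_div_assoc, *]

variable (Y mY) in
/-- `Δ⁺` on `C⁰(Y)`, conjugated by multiplication with `√wt`; this makes it symmetric for the
Euclidean inner product, so that the spectral theorem applies. -/
noncomputable def conjLapPlus : Module.End ℝ (EuclideanSpace ℝ (Fin 1 → V)) :=
  toEuclid Y mY ∘ₗ Y.deltaLin mY 1 ∘ₗ dLin V 1 ∘ₗ ofEuclid Y mY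

lemma ofEuclid_of_isOSimp (u : EuclideanSpace ℝ (Fin 1 → V)) {w : Fin 1 → V}
    (hw : Y.IsOSimp w) : ofEuclid Y mY u w = u w / √(Y.wt mY w) := if_pos hw

lemma ofEuclid_of_not_isOSimp (u : EuclideanSpace ℝ (Fin 1 → V)) {w : Fin 1 → V}
    (hw : ¬Y.IsOSimp w) : ofEuclid Y mY u w = 0 := if_neg hw

lemma inner_toEuclid_left (hpos : ∀ t ∈ Y.faces, 0 < mY t) (f : (Fin 1 → V) → ℝ)
    (u : EuclideanSpace ℝ (Fin 1 → V)) :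
    ⟪toEuclid Y mY f, u⟫ = Y.innerF mY 1 f (ofEuclid Y mY u) := by
  rw [PiLp.inner_apply, innerF]
  refine sum_congr rfl fun w _ => ?_
  simp only [toEuclid, LinearMap.coe_mk, AddHom.coe_mk, PiLp.toLp_apply, RCLike.inner_apply,
    conj_trivial, Nat.factorial_one, Nat.cast_one, div_one]
  by_cases hw : Y.IsOSimp w
  · have hsqrt := Real.sqrt_pos.mpr (wt_pos hpos hw)
    rw [ofEuclid_of_isOSimp u hw]
    field_simp
    rw [Real.sq_sqrt (wt_nonneg hpos w)]
    ring
  · simp [ofEuclid_of_not_isOSimp u hw, wt_of_not_isOSimp hw]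

lemma ofEuclid_toEuclid (hpos : ∀ t ∈ Y.faces, 0 < mY t) {f : (Fin 1 → V) → ℝ}
    (hf : ∀ w, ¬Y.IsOSimp w → f w = 0) : ofEuclid Y mY (toEuclid Y mY f) = f := by
  funext w
  by_cases hw : Y.IsOSimp w
  · rw [ofEuclid_of_isOSimp _ hw]
    simp [toEuclid, (Real.sqrt_pos.mpr (wt_pos hpos hw)).ne']
  · rw [ofEuclid_of_not_isOSimp _ hw, hf w hw]

lemma inner_conjLapPlus (hpos : ∀ t ∈ Y.faces, 0 < mY t)
    (u u' : EuclideanSpace ℝ (Fin 1 → V)) : ⟪conjLapPlus Y mY u, u'⟫ =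
      Y.innerF mY 2 (dOp (ofEuclid Y mY u)) (dOp (ofEuclid Y mY u')) := by
  rw [conjLapPlus, LinearMap.comp_apply, inner_toEuclid_left hpos]
  exact innerF_deltaOp_left hpos (dOp_mem_antisymm (mem_antisymm_one _)) _

lemma isSymmetric_conjLapPlus (hpos : ∀ t ∈ Y.faces, 0 < mY t) :
    (conjLapPlus Y mY).IsSymmetric := fun u u' => by
  rw [inner_conjLapPlus hpos, real_inner_comm, inner_conjLapPlus hpos, innerF_comm]

lemma mem_specLapPlus_of_hasEigenvalue (hpos : ∀ t ∈ Y.faces, 0 < mY t) {μ : ℝ}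
    (hμ : HasEigenvalue (conjLapPlus Y mY) μ) (hμ0 : μ ≠ 0) : μ ∈ Y.specLapPlus mY 1 := by
  obtain ⟨u, hu, hu0⟩ := hμ.exists_hasEigenvector
  rw [mem_eigenspace_iff] at hu
  have hsqrt : ∀ w : Fin 1 → V, Y.IsOSimp w → √(Y.wt mY w) ≠ 0 := fun w hw =>
    (Real.sqrt_pos.mpr (wt_pos hpos hw)).ne'
  have happly : ∀ w, μ * u w = √(Y.wt mY w) * Y.lapPlus mY 1 (ofEuclid Y mY u) w := fun w => by
    have := congrArg (fun x : EuclideanSpace ℝ (Fin 1 → V) => x w) hu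
    simp only [PiLp.smul_apply, smul_eq_mul] at this
    rw [← this]
    rfl
  have hsupp : ∀ w, ¬Y.IsOSimp w → u w = 0 := fun w hw => by
    have := happly w
    rw [wt_of_not_isOSimp hw, Real.sqrt_zero, zero_mul] at this
    exact (mul_eq_zero.mp this).resolve_left hμ0
  refine ⟨ofEuclid Y mY u, ⟨mem_antisymm_one _, fun w hw => ofEuclid_of_not_isOSimp u hw⟩,
    fun he => hu0 ?_, ?_⟩
  · ext w
    by_cases hw : Y.IsOSimp w
    · have := congrFun he w
      rw [ofEuclid_of_isOSimp u hw, Pi.zero_apply, div_eq_zero_iff] at this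
      exact this.resolve_right (hsqrt w hw)
    · exact hsupp w hw
  · funext w
    by_cases hw : Y.IsOSimp w
    · have := happly w
      rw [Pi.smul_apply, smul_eq_mul, ofEuclid_of_isOSimp u hw]
      field_simp [hsqrt w hw] at this ⊢
      linarith
    · rw [Pi.smul_apply, ofEuclid_of_not_isOSimp u hw, smul_zero]
      exact deltaOp_of_not_isOSimp _ hw

lemma apply_eq_of_reachable (hpos : ∀ t ∈ Y.faces, 0 < mY t) {e : (Fin 1 → V) → ℝ}
    (he : Y.innerF mY 2 (dOp e) (dOp e) = 0) {a b : V} (hab : Y.skeleton.Reachable a b) :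
    e (fun _ => a) = e (fun _ => b) := by
  obtain ⟨walk⟩ := hab
  induction walk with
  | nil => rfl
  | @cons a b _ hadj _ ih =>
    refine Eq.trans ?_ ih
    have hedge : Y.IsOSimp (Fin.cons a fun _ => b : Fin 2 → V) := by
      refine isOSimp_iff_card.mpr ?_
      rw [image_cons, image_const_one, card_insert_of_notMem (by simpa using hadj.1)]
      exact ⟨rfl, hadj.2⟩
    have := eq_zero_of_innerF_self_eq_zero hpos he hedge
    rw [dOp_fin_one, sub_eq_zero] at this
    exact this.symm

lemma eq_const_of_conjLapPlus_eq_zero (hpos : ∀ t ∈ Y.faces, 0 < mY t)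
    (hconn : Y.SkelConnected) {u : EuclideanSpace ℝ (Fin 1 → V)} (hu : conjLapPlus Y mY u = 0) :
    ∃ c, ∀ w, Y.IsOSimp w → ofEuclid Y mY u w = c := by
  have he : Y.innerF mY 2 (dOp (ofEuclid Y mY u)) (dOp (ofEuclid Y mY u)) = 0 := by
    rw [← inner_conjLapPlus hpos, hu, inner_zero_left]
  have hvertex : ∀ w : Fin 1 → V, Y.IsOSimp w → w = (fun _ => w 0) ∧ {w 0} ∈ Y.faces :=
    fun w hw => ⟨funext fun x => by rw [Subsingleton.elim x 0], by
      simpa [image_const_one, ← funext fun x : Fin 1 => congrArg w (Subsingleton.elim x 0)]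
        using hw.2⟩
  by_cases hne : ∃ w : Fin 1 → V, Y.IsOSimp w
  · obtain ⟨w₀, hw₀⟩ := hne
    refine ⟨ofEuclid Y mY u w₀, fun w hw => ?_⟩
    rw [(hvertex w hw).1, (hvertex w₀ hw₀).1]
    exact apply_eq_of_reachable hpos he (hconn _ _ (hvertex w hw).2 (hvertex w₀ hw₀).2)
  · exact ⟨0, fun w hw => absurd ⟨w, hw⟩ hne⟩

lemma innerF_dOp_self_le (hpos : ∀ t ∈ Y.faces, 0 < mY t) {lam kap : ℝ}
    (hspec : Y.specLapPlus mY 1 \ {0} ⊆ Set.Icc lam kap) (hkap : 0 ≤ kap)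
    {f : (Fin 1 → V) → ℝ} (hf : ∀ w, ¬Y.IsOSimp w → f w = 0) :
    Y.innerF mY 2 (dOp f) (dOp f) ≤ kap * Y.innerF mY 1 f f := by
  have h := (isSymmetric_conjLapPlus hpos).inner_map_self_le (κ := kap) (fun μ hμ => by
    by_cases hμ0 : μ = 0
    · exact hμ0 ▸ hkap
    · exact (hspec ⟨mem_specLapPlus_of_hasEigenvalue hpos hμ hμ0, hμ0⟩).2) (toEuclid Y mY f)
  rwa [inner_conjLapPlus hpos, inner_toEuclid_left hpos, ofEuclid_toEuclid hpos hf] at h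

lemma le_innerF_dOp_self (hpos : ∀ t ∈ Y.faces, 0 < mY t) (hconn : Y.SkelConnected)
    {lam kap : ℝ} (hspec : Y.specLapPlus mY 1 \ {0} ⊆ Set.Icc lam kap)
    {f : (Fin 1 → V) → ℝ} (hf : ∀ w, ¬Y.IsOSimp w → f w = 0)
    (horth : Y.innerF mY 1 f (fun _ => 1) = 0) :
    lam * Y.innerF mY 1 f f ≤ Y.innerF mY 2 (dOp f) (dOp f) := by
  have h := (isSymmetric_conjLapPlus hpos).le_inner_map_self (lam := lam)
    (fun μ hμ hμ0 => (hspec ⟨mem_specLapPlus_of_hasEigenvalue hpos hμ hμ0, hμ0⟩).1)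
    (x := toEuclid Y mY f) (fun u hu => by
      obtain ⟨c, hc⟩ := eq_const_of_conjLapPlus_eq_zero hpos hconn hu
      rw [inner_toEuclid_left hpos, innerF_congr_right f (ψ' := c • fun _ => 1) fun w hw => by
        simp [hc w hw], ← innerBilin_apply, map_smul, innerBilin_apply, horth, smul_zero])
  rwa [inner_conjLapPlus hpos, inner_toEuclid_left hpos, ofEuclid_toEuclid hpos hf] at h

end VertexSpectrum

section GarlandInequality

variable {lam kap : ℝ}

lemma sum_wt_cons_mul_congr {τ : Fin j → V} {F G : V → ℝ}
    (h : ∀ v, X.IsOSimp (Fin.cons v τ) → F v = G v) :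
    ∑ v, X.wt m (Fin.cons v τ) * F v = ∑ v, X.wt m (Fin.cons v τ) * G v := by
  refine sum_congr rfl fun v _ => ?_
  by_cases hv : X.IsOSimp (Fin.cons v τ)
  · rw [h v hv]
  · simp [wt_of_not_isOSimp hv]

lemma IsOSimp.cons_of_cons_cons {u v : V} {τ : Fin j → V}
    (h : X.IsOSimp (Fin.cons u (Fin.cons v τ))) : X.IsOSimp (Fin.cons u τ) :=
  ((isOSimp_congr (σ' := Fin.cons v (Fin.cons u τ))
    (by simp only [image_cons, insert_comm])).mp h).of_cons

variable (X m) in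
noncomputable def centeredLocalization (φ : (Fin (k + 1) → V) → ℝ) (τ : Fin k → V) :
    (Fin 1 → V) → ℝ :=
  (X.link (image τ univ)).restrict fun w => φ (Fin.cons (w 0) τ) - X.deltaOp m φ τ

lemma centeredLocalization_apply {τ : Fin k → V} (hτ : X.IsOSimp τ)
    (φ : (Fin (k + 1) → V) → ℝ) {v : V} (hv : X.IsOSimp (Fin.cons v τ)) :
    X.centeredLocalization m φ τ (fun _ => v) = φ (Fin.cons v τ) - X.deltaOp m φ τ :=
  if_pos ((link_isOSimp_vertex_iff hτ v).mpr hv)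

lemma innerF_centeredLocalization_self (hm : X.IsBalanced n m) (hk : k ≤ n)
    {τ : Fin k → V} (hτ : X.IsOSimp τ) (φ : (Fin (k + 1) → V) → ℝ) :
    (X.link (image τ univ)).innerF (linkWt m (image τ univ)) 1
      (X.centeredLocalization m φ τ) (X.centeredLocalization m φ τ) = X.localVariance m φ τ := by
  set c := X.deltaOp m φ τ
  rw [link_innerF_one hτ, sum_wt_cons_mul_congr (G := fun v => (φ (Fin.cons v τ) - c) ^ 2)
    fun v hv => by rw [centeredLocalization_apply hτ φ hv, sq]]
  have hexpand : ∀ v, X.wt m (Fin.cons v τ) * (φ (Fin.cons v τ) - c) ^ 2 =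
      X.wt m (Fin.cons v τ) * φ (Fin.cons v τ) ^ 2 -
        2 * c * (X.wt m (Fin.cons v τ) * φ (Fin.cons v τ)) + c ^ 2 * X.wt m (Fin.cons v τ) :=
    fun v => by ring
  simp only [hexpand, sum_add_distrib, sum_sub_distrib, ← mul_sum, ← wt_mul_deltaOp hm.1,
    sum_wt_cons hm hk, localVariance, localNormSq]
  ring

lemma innerF_centeredLocalization_one (hm : X.IsBalanced n m) (hk : k ≤ n)
    {τ : Fin k → V} (hτ : X.IsOSimp τ) (φ : (Fin (k + 1) → V) → ℝ) :
    (X.link (image τ univ)).innerF (linkWt m (image τ univ)) 1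
      (X.centeredLocalization m φ τ) (fun _ => 1) = 0 := by
  rw [link_innerF_one hτ, sum_wt_cons_mul_congr (G := fun v => φ (Fin.cons v τ) - X.deltaOp m φ τ)
    fun v hv => by rw [centeredLocalization_apply hτ φ hv, mul_one]]
  simp only [mul_sub, sum_sub_distrib, ← wt_mul_deltaOp hm.1, ← sum_mul, sum_wt_cons hm hk,
    sub_self]

lemma innerF_dOp_centeredLocalization {τ : Fin k → V} (hτ : X.IsOSimp τ)
    (φ : (Fin (k + 1) → V) → ℝ) :
    (X.link (image τ univ)).innerF (linkWt m (image τ univ)) 2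
      (dOp (X.centeredLocalization m φ τ)) (dOp (X.centeredLocalization m φ τ)) =
      X.localEnergy m φ τ := by
  rw [link_innerF_two hτ, localEnergy]
  refine sum_congr rfl fun u _ => sum_congr rfl fun v _ => ?_
  by_cases huv : X.IsOSimp (Fin.cons u (Fin.cons v τ))
  · rw [dOp_fin_one, centeredLocalization_apply hτ φ huv.of_cons,
      centeredLocalization_apply hτ φ huv.cons_of_cons_cons]
    ring
  · simp [wt_of_not_isOSimp huv]

lemma localEnergy_bounds (hm : X.IsBalanced n m) (hconn : X.AllLinksConnected n) (hk : k < n)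
    (hlam : 0 ≤ lam) (hlk : lam ≤ kap)
    (hspec : ∀ τ : Fin k → V, X.IsOSimp τ →
      (X.link (image τ univ)).specLapPlus (linkWt m (image τ univ)) 1 \ {0} ⊆ Set.Icc lam kap)
    (φ : (Fin (k + 1) → V) → ℝ) (τ : Fin k → V) :
    0 ≤ X.localVariance m φ τ ∧ lam * X.localVariance m φ τ ≤ X.localEnergy m φ τ ∧
      X.localEnergy m φ τ ≤ kap * X.localVariance m φ τ := by
  by_cases hτ : ¬X.IsOSimp τ
  · have hV : X.localVariance m φ τ = 0 := by
      simp [localVariance, localNormSq, wt_cons_of_not_isOSimp hτ, wt_of_not_isOSimp hτ]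
    have hE : X.localEnergy m φ τ = 0 := by
      simp [localEnergy, wt_cons_of_not_isOSimp fun h : X.IsOSimp (Fin.cons _ τ) => hτ h.of_cons]
    simp [hV, hE]
  rw [not_not] at hτ
  have hpos := linkWt_pos hm.1 hτ.2
  have hconnY := hconn.2 _ hτ.2 ((isOSimp_iff_card.mp hτ).1.symm ▸ hk)
  have hsupp : ∀ w, ¬(X.link (image τ univ)).IsOSimp w → X.centeredLocalization m φ τ w = 0 :=
    fun w hw => if_neg hw
  rw [← innerF_centeredLocalization_self hm hk.le hτ, ← innerF_dOp_centeredLocalization hτ]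
  exact ⟨innerF_self_nonneg hpos _, le_innerF_dOp_self hpos hconnY (hspec τ hτ) hsupp
    (innerF_centeredLocalization_one hm hk.le hτ φ),
    innerF_dOp_self_le hpos (hspec τ hτ) (hlam.trans hlk) hsupp⟩

theorem garland_inequality (hm : X.IsBalanced n m) (hconn : X.AllLinksConnected n)
    (hk : k + 1 ≤ n) (hlam : 0 ≤ lam) (hlk : lam ≤ kap)
    (hspec : ∀ τ : Fin k → V, X.IsOSimp τ →
      (X.link (image τ univ)).specLapPlus (linkWt m (image τ univ)) 1 \ {0} ⊆ Set.Icc lam kap)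
    {φ : (Fin (k + 1) → V) → ℝ} (hφ : φ ∈ antisymm V (k + 1)) :
    let gap := (k + 1) * X.innerF m (k + 1) φ φ - X.innerF m k (X.deltaOp m φ) (X.deltaOp m φ)
    0 ≤ gap ∧ lam * gap ≤ k * X.innerF m (k + 1) φ φ + X.innerF m (k + 2) (dOp φ) (dOp φ) ∧
      k * X.innerF m (k + 1) φ φ + X.innerF m (k + 2) (dOp φ) (dOp φ) ≤ kap * gap := by
  intro gap
  have hbounds := localEnergy_bounds hm hconn hk hlam hlk hspec φ
  have hV := sum_localVariance (m := m) (X := X) φ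
  have hE := sum_localEnergy hm hk hφ
  have hfact : (0 : ℝ) < k.factorial := by positivity
  have h0 : 0 ≤ ∑ τ, X.localVariance m φ τ := sum_nonneg fun τ _ => (hbounds τ).1
  have hlow : lam * ∑ τ, X.localVariance m φ τ ≤ ∑ τ, X.localEnergy m φ τ := by
    rw [mul_sum]
    exact sum_le_sum fun τ _ => (hbounds τ).2.1
  have hup : ∑ τ, X.localEnergy m φ τ ≤ kap * ∑ τ, X.localVariance m φ τ := by
    rw [mul_sum]
    exact sum_le_sum fun τ _ => (hbounds τ).2.2
  rw [hV, hE] at *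
  refine ⟨nonneg_of_mul_nonneg_right (by linarith) hfact, ?_, ?_⟩
  · exact le_of_mul_le_mul_left (by linarith) hfact
  · exact le_of_mul_le_mul_left (by linarith) hfact

end GarlandInequality

section ShiftedLaplacian

variable (X m k) in
noncomputable def shiftedLap (μ a : ℝ) : Module.End ℝ ((Fin (k + 1) → V) → ℝ) :=
  X.deltaLin m (k + 1) ∘ₗ dLin V (k + 1) + μ • (dLin V k ∘ₗ X.deltaLin m k) -
    a • LinearMap.id

lemma shiftedLap_apply (μ a : ℝ) (φ : (Fin (k + 1) → V) → ℝ) :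
    X.shiftedLap m k μ a φ = X.lapPlus m (k + 1) φ + μ • X.lapMinus m k φ - a • φ := rfl

lemma shiftedLap_mem_antisymm (μ a : ℝ) {φ : (Fin (k + 1) → V) → ℝ}
    (hφ : φ ∈ antisymm V (k + 1)) : X.shiftedLap m k μ a φ ∈ antisymm V (k + 1) :=
  sub_mem (add_mem (deltaOp_mem_antisymm (dOp_mem_antisymm hφ))
      (Submodule.smul_mem _ μ (dOp_mem_antisymm (deltaOp_mem_antisymm hφ))))
    (Submodule.smul_mem _ a hφ)

lemma innerF_shiftedLap (hmp : ∀ s ∈ X.faces, 0 < m s) (μ a : ℝ)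
    {φ ψ : (Fin (k + 1) → V) → ℝ} (hφ : φ ∈ antisymm V (k + 1)) (hψ : ψ ∈ antisymm V (k + 1)) :
    X.innerF m (k + 1) (X.shiftedLap m k μ a φ) ψ = X.innerF m (k + 2) (dOp φ) (dOp ψ) +
      μ * X.innerF m k (X.deltaOp m φ) (X.deltaOp m ψ) - a * X.innerF m (k + 1) φ ψ := by
  rw [← innerBilin_apply, shiftedLap_apply, map_sub, map_add, map_smul, map_smul,
    LinearMap.sub_apply, LinearMap.add_apply, LinearMap.smul_apply, LinearMap.smul_apply,
    innerBilin_apply, innerBilin_apply, innerBilin_apply, smul_eq_mul, smul_eq_mul, lapPlus,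
    lapMinus, innerF_deltaOp_left hmp (dOp_mem_antisymm hφ), innerF_dOp_left hmp _ hψ]

lemma innerF_shiftedLap_self_le (hmp : ∀ s ∈ X.faces, 0 < m s) (μ a : ℝ) {c : ℝ}
    (hc : 0 ≤ c) (h : ∀ φ ∈ antisymm V (k + 1),
      |X.innerF m (k + 1) (X.shiftedLap m k μ a φ) φ| ≤ c * X.innerF m (k + 1) φ φ)
    {φ : (Fin (k + 1) → V) → ℝ} (hφ : φ ∈ antisymm V (k + 1)) :
    X.innerF m (k + 1) (X.shiftedLap m k μ a φ) (X.shiftedLap m k μ a φ) ≤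
      c ^ 2 * X.innerF m (k + 1) φ φ := by
  let S := antisymm V (k + 1)
  let T : Module.End ℝ S := (X.shiftedLap m k μ a).restrict fun _ => shiftedLap_mem_antisymm μ a
  let B : LinearMap.BilinForm ℝ S := (X.innerBilin m (k + 1)).compl₁₂ S.subtype S.subtype
  have hT : LinearMap.IsAdjointPair B B T T := fun ψ χ => by
    change X.innerF m (k + 1) (X.shiftedLap m k μ a ψ.1) χ.1 =
      X.innerF m (k + 1) ψ.1 (X.shiftedLap m k μ a χ.1)
    rw [innerF_comm ψ.1, innerF_shiftedLap hmp μ a ψ.2 χ.2, innerF_shiftedLap hmp μ a χ.2 ψ.2,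
      innerF_comm (dOp χ.1), innerF_comm (X.deltaOp m χ.1), innerF_comm χ.1]
  exact hT.apply_map_map_le hc (fun ψ => h ψ.1 ψ.2) ⟨φ, hφ⟩

theorem abs_innerF_shiftedLap_le {lam kap : ℝ} (hm : X.IsBalanced n m)
    (hconn : X.AllLinksConnected n) (hk : k + 1 ≤ n) (hlam : 0 ≤ lam) (hlk : lam ≤ kap)
    (hspec : ∀ τ : Fin k → V, X.IsOSimp τ →
      (X.link (image τ univ)).specLapPlus (linkWt m (image τ univ)) 1 \ {0} ⊆ Set.Icc lam kap)
    {φ : (Fin (k + 1) → V) → ℝ} (hφ : φ ∈ antisymm V (k + 1)) :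
    |X.innerF m (k + 1)
        (X.shiftedLap m k ((lam + kap) / 2) ((k + 1) * ((lam + kap) / 2 - k / (k + 1))) φ) φ| ≤
      (k + 1) * (kap - lam) / 2 * X.innerF m (k + 1) φ φ := by
  obtain ⟨h0, hlow, hup⟩ := garland_inequality hm hconn hk hlam hlk hspec hφ
  have hN := innerF_self_nonneg hm.1 φ
  have hΔ := innerF_self_nonneg hm.1 (X.deltaOp m φ)
  have hcoef : ((k : ℝ) + 1) * ((lam + kap) / 2 - k / (k + 1)) =
      (k + 1) * ((lam + kap) / 2) - k := by
    field_simp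
  rw [innerF_shiftedLap hm.1 _ _ hφ hφ, hcoef, abs_le]
  constructor <;> nlinarith [mul_nonneg (sub_nonneg.mpr hlk) hΔ]

end ShiftedLaplacian

end SComplex

open SComplex

theorem garland_operator_norm_bound_general
    (X : SComplex V) (n : ℕ) (m : Finset V → ℝ)
    (hn : 1 < n) (hm : X.IsBalanced n m)
    (hconn : X.AllLinksConnected n)
    (k : ℕ) (hk : k ≤ n - 1)
    (lam kap : ℝ) (hlam : (k : ℝ) / ((k : ℝ) + 1) < lam) (hlk : lam ≤ kap)
    (hspec : ∀ τ : Fin k → V, X.IsOSimp τ →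
      (X.link (Finset.image τ Finset.univ)).specLapPlus
          (linkWt m (Finset.image τ Finset.univ)) 1 \ {0} ⊆ Set.Icc lam kap) :
    ∀ φ : (Fin (k + 1) → V) → ℝ, X.IsForm (k + 1) φ →
      X.innerF m (k + 1)
        (X.lapPlus m (k + 1) φ + ((lam + kap) / 2) • X.lapMinus m k φ -
          (((k : ℝ) + 1) * ((lam + kap) / 2 - (k : ℝ) / ((k : ℝ) + 1))) • φ)
        (X.lapPlus m (k + 1) φ + ((lam + kap) / 2) • X.lapMinus m k φ -
          (((k : ℝ) + 1) * ((lam + kap) / 2 - (k : ℝ) / ((k : ℝ) + 1))) • φ) ≤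
      (((k : ℝ) + 1) * (kap - lam) / 2) ^ 2 * X.innerF m (k + 1) φ φ := by
  intro φ hφ
  have hkn : k + 1 ≤ n := by omega
  have hlam0 : 0 ≤ lam := (div_nonneg k.cast_nonneg (by positivity)).trans hlam.le
  have hc : 0 ≤ ((k : ℝ) + 1) * (kap - lam) / 2 :=
    div_nonneg (mul_nonneg (by positivity) (sub_nonneg.mpr hlk)) zero_le_two
  exact innerF_shiftedLap_self_le hm.1 _ _ hc
    (fun ψ hψ => abs_innerF_shiftedLap_le hm hconn hkn hlam0 hlk hspec hψ) hφ.1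

/-- Corollary 3.8: operator norm bound for
`Δ⁺_k + ((λ+κ)/2) Δ⁻_k - (k+1)((λ+κ)/2 - k/(k+1)) I`, given spectral gaps in the links of
`(k-1)`-simplices. The operator norm bound is expressed by the inequality
`‖Tφ‖² ≤ c² ‖φ‖²` for every `k`-form `φ`. -/
theorem garland_operator_norm_bound
    (X : SComplex V) (n : ℕ) (m : Finset V → ℝ)
    (hn : 1 < n) (hpure : X.Pure n) (hm : X.IsBalanced n m)
    (hconn : X.AllLinksConnected n)
    (k : ℕ) (hk : k ≤ n - 1)
    (lam kap : ℝ) (hlam : (k : ℝ) / ((k : ℝ) + 1) < lam) (hlk : lam ≤ kap)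
    (hspec : ∀ τ : Fin k → V, X.IsOSimp τ →
      (X.link (Finset.image τ Finset.univ)).specLapPlus
          (linkWt m (Finset.image τ Finset.univ)) 1 \ {0} ⊆ Set.Icc lam kap) :
    ∀ φ : (Fin (k + 1) → V) → ℝ, X.IsForm (k + 1) φ →
      X.innerF m (k + 1)
        (X.lapPlus m (k + 1) φ + ((lam + kap) / 2) • X.lapMinus m k φ -
          (((k : ℝ) + 1) * ((lam + kap) / 2 - (k : ℝ) / ((k : ℝ) + 1))) • φ)
        (X.lapPlus m (k + 1) φ + ((lam + kap) / 2) • X.lapMinus m k φ -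
          (((k : ℝ) + 1) * ((lam + kap) / 2 - (k : ℝ) / ((k : ℝ) + 1))) • φ) ≤
      (((k : ℝ) + 1) * (kap - lam) / 2) ^ 2 * X.innerF m (k + 1) φ φ :=
  garland_operator_norm_bound_general X n m hn hm hconn k hk lam kap hlam hlk hspec
end

section
/- Let X be a finite pure n-dimensional weighted simplicial complex with n > 1. For every φ, ψ ∈ C^0(X,ℝ) and every 0 ≤ l ≤ n−2: ⟨dφ, dψ⟩ = Σ_{τ ∈ Σ(l)} ⟨d_τ φ^τ, d_τ ψ^τ⟩, where d_τ denotes the differential of the link X_τ and the inner products on the right-hand side are taken in X_τ. -/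
open Finset

variable {V : Type} [Fintype V] [DecidableEq V]

/-! Iterating the balance condition, the weight of an ordered edge `σ` is the total weight
`m (σ ∪ τ)` of the ordered `l`-simplices `τ` of its link. The condition on the pair `(σ, τ)` —
disjoint ordered simplices spanning a face — is symmetric, so exchanging the two sums rewrites
`⟨dφ, dψ⟩` as a sum over `τ` of inner products on the links `X_τ`; on an edge of `X_τ` the
restrictions `φ^τ`, `ψ^τ` have the same differentials as `φ`, `ψ`. -/

namespace SComplex

lemma image_univ_cons {α : Type*} [DecidableEq α] {k : ℕ} (v : α) (ρ : Fin k → α) :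
    image (Fin.cons v ρ : Fin (k + 1) → α) univ = insert v (image ρ univ) :=
  coe_injective <| by simp only [coe_image, coe_univ, Set.image_univ, Fin.range_cons, coe_insert]

lemma image_univ_comp_subset {α : Type*} [DecidableEq α] {j k : ℕ} (σ : Fin j → α)
    (g : Fin k → Fin j) : image (σ ∘ g) univ ⊆ image σ univ := by
  rw [← image_image]
  exact image_subset_image (subset_univ _)

lemma IsOSimp.comp_succAbove {X : SComplex V} {j : ℕ} {σ : Fin (j + 1) → V} (hσ : X.IsOSimp σ)
    (i : Fin (j + 1)) : X.IsOSimp (σ ∘ i.succAbove) :=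
  ⟨hσ.1.comp i.succAbove_right_injective,
    X.down_closed _ hσ.2 _ (image_univ_comp_subset σ i.succAbove)⟩

variable (X : SComplex V)

lemma link_isOSimp_iff_s17 {s : Finset V} (hs : s ∈ X.faces) {k : ℕ} (τ : Fin k → V) :
    (X.link s).IsOSimp τ ↔
      Function.Injective τ ∧ Disjoint s (image τ univ) ∧ s ∪ image τ univ ∈ X.faces := by
  simp only [IsOSimp, link, mem_insert, mem_filter]
  constructor
  · rintro ⟨hinj, h | ⟨-, hdisj, hface⟩⟩
    · exact ⟨hinj, by simp [h], by simpa [h] using hs⟩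
    · exact ⟨hinj, hdisj, hface⟩
  · rintro ⟨hinj, hdisj, hface⟩
    exact ⟨hinj, Or.inr ⟨X.down_closed _ hface _ subset_union_right, hdisj, hface⟩⟩

lemma isOSimp_and_link_isOSimp_iff {j k : ℕ} (σ : Fin j → V) (τ : Fin k → V) :
    (X.IsOSimp σ ∧ (X.link (image σ univ)).IsOSimp τ) ↔
      Function.Injective σ ∧ Function.Injective τ ∧ Disjoint (image σ univ) (image τ univ) ∧
        image σ univ ∪ image τ univ ∈ X.faces := by
  constructor
  · rintro ⟨hσ, hτ⟩
    exact ⟨hσ.1, (X.link_isOSimp_iff_s17 hσ.2 τ).mp hτ⟩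
  · rintro ⟨hσ, hτ, hdisj, hface⟩
    have hσ' : X.IsOSimp σ := ⟨hσ, X.down_closed _ hface _ subset_union_left⟩
    exact ⟨hσ', (X.link_isOSimp_iff_s17 hσ'.2 τ).mpr ⟨hτ, hdisj, hface⟩⟩

lemma isOSimp_fin_zero (τ : Fin 0 → V) : X.IsOSimp τ :=
  ⟨Function.injective_of_subsingleton τ, by simpa using X.empty_mem⟩

lemma dOp_restrict_of_isOSimp {j : ℕ} (φ : (Fin j → V) → ℝ) {σ : Fin (j + 1) → V}
    (hσ : X.IsOSimp σ) : dOp (X.restrict φ) σ = dOp φ σ :=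
  sum_congr rfl fun i _ => by rw [restrict, if_pos (hσ.comp_succAbove i)]

lemma innerF_dOp_restrict (m : Finset V → ℝ) (j : ℕ) (φ ψ : (Fin j → V) → ℝ) :
    X.innerF m (j + 1) (dOp (X.restrict φ)) (dOp (X.restrict ψ)) =
      X.innerF m (j + 1) (dOp φ) (dOp ψ) := by
  refine sum_congr rfl fun σ _ => ?_
  by_cases hσ : X.IsOSimp σ
  · rw [X.dOp_restrict_of_isOSimp φ hσ, X.dOp_restrict_of_isOSimp ψ hσ]
  · simp [wt, hσ]

variable (m : Finset V → ℝ)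

/-- `m (σ ∪ τ)` if `σ` and `τ` are disjoint ordered simplices spanning a face, `0` otherwise. -/
noncomputable def linkWtOf {j k : ℕ} (σ : Fin j → V) (τ : Fin k → V) : ℝ :=
  if X.IsOSimp σ then (X.link (image σ univ)).wt (linkWt m (image σ univ)) τ else 0

lemma linkWtOf_comm {j k : ℕ} (σ : Fin j → V) (τ : Fin k → V) :
    X.linkWtOf m σ τ = X.linkWtOf m τ σ := by
  have hcond : (X.IsOSimp σ ∧ (X.link (image σ univ)).IsOSimp τ) ↔
      (X.IsOSimp τ ∧ (X.link (image τ univ)).IsOSimp σ) := by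
    rw [isOSimp_and_link_isOSimp_iff, isOSimp_and_link_isOSimp_iff, disjoint_comm, union_comm]
    tauto
  simp only [linkWtOf, wt, linkWt, ← ite_and, hcond, union_comm]

lemma link_wt_cons {s : Finset V} (hs : s ∈ X.faces) {k : ℕ} (v : V) (ρ : Fin k → V) :
    (X.link s).wt (linkWt m s) (Fin.cons v ρ : Fin (k + 1) → V) =
      if v ∉ s ∧ insert v s ∈ X.faces then
        (X.link (insert v s)).wt (linkWt m (insert v s)) ρ else 0 := by
  simp only [wt, ← ite_and, linkWt, image_univ_cons, union_insert, insert_union]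
  congr 1
  rw [eq_iff_iff, X.link_isOSimp_iff_s17 hs, Fin.cons_injective_iff, image_univ_cons,
    disjoint_insert_right, union_insert]
  constructor
  · rintro ⟨⟨hvρ, hinj⟩, ⟨hvs, hdisj⟩, hface⟩
    have hvs' : insert v s ∈ X.faces :=
      X.down_closed _ hface _ (insert_subset_insert _ subset_union_left)
    refine ⟨⟨hvs, hvs'⟩, (X.link_isOSimp_iff_s17 hvs' ρ).mpr ⟨hinj, ?_, by rwa [insert_union]⟩⟩
    rw [disjoint_insert_left]
    exact ⟨by simpa using hvρ, hdisj⟩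
  · rintro ⟨⟨hvs, hvs'⟩, hρ⟩
    obtain ⟨hinj, hdisj, hface⟩ := (X.link_isOSimp_iff_s17 hvs' ρ).mp hρ
    rw [disjoint_insert_left] at hdisj
    exact ⟨⟨by simpa using hdisj.1, hinj⟩, ⟨hvs, hdisj.2⟩, by rwa [insert_union] at hface⟩

variable {X m} {n : ℕ}

lemma IsBalanced.eq_sum_insert (hm : X.IsBalanced n m) {s : Finset V} (hs : s ∈ X.faces)
    (hc : s.card ≤ n) :
    m s = ∑ v, if v ∉ s ∧ insert v s ∈ X.faces then m (insert v s) else 0 := by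
  have hcofaces : X.faces.filter (fun t => s ⊆ t ∧ t.card = s.card + 1) =
      (univ.filter fun v => v ∉ s ∧ insert v s ∈ X.faces).image (insert · s) := by
    ext t
    simp only [mem_filter, mem_image, mem_univ, true_and]
    constructor
    · rintro ⟨ht, hst, hcard⟩
      obtain ⟨v, hv, rfl⟩ := exists_eq_insert_iff.2 ⟨hst, hcard.symm⟩
      exact ⟨v, ⟨hv, ht⟩, rfl⟩
    · rintro ⟨v, ⟨hv, hface⟩, rfl⟩
      exact ⟨hface, subset_insert _ _, card_insert_of_notMem hv⟩
  rw [hm.2 s hs hc, hcofaces, sum_image, sum_filter]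
  exact fun v hv w _ h => (insert_inj (mem_filter.1 hv).2.1).1 h

lemma IsBalanced.eq_sum_link_wt (hm : X.IsBalanced n m) :
    ∀ (k : ℕ) {s : Finset V}, s ∈ X.faces → s.card + k ≤ n + 1 →
      m s = ∑ τ : Fin k → V, (X.link s).wt (linkWt m s) τ
  | 0, s, hs, _ => by
    simp [wt, linkWt, isOSimp_fin_zero]
  | k + 1, s, hs, hc => by
    calc m s = ∑ v, if v ∉ s ∧ insert v s ∈ X.faces then m (insert v s) else 0 :=
          hm.eq_sum_insert hs (by omega)
      _ = ∑ v, ∑ ρ : Fin k → V, (X.link s).wt (linkWt m s) (Fin.cons v ρ : Fin (k + 1) → V) := by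
          refine sum_congr rfl fun v _ => ?_
          simp only [X.link_wt_cons m hs]
          split_ifs with h
          · exact hm.eq_sum_link_wt k h.2 (by rw [card_insert_of_notMem h.1]; omega)
          · simp
      _ = ∑ τ : Fin (k + 1) → V, (X.link s).wt (linkWt m s) τ := by
          rw [← (Fin.consEquiv fun _ => V).sum_comp, Fintype.sum_prod_type]
          rfl

lemma IsBalanced.wt_eq_sum_linkWtOf (hm : X.IsBalanced n m) {j k : ℕ} (hjk : j + k ≤ n + 1)
    (σ : Fin j → V) : X.wt m σ = ∑ τ : Fin k → V, X.linkWtOf m σ τ := by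
  unfold wt linkWtOf
  split_ifs with hσ
  · exact hm.eq_sum_link_wt k hσ.2 (by simpa [card_image_of_injective _ hσ.1])
  · simp

end SComplex

open SComplex

theorem restriction_of_differential_general
    (X : SComplex V) (n : ℕ) (m : Finset V → ℝ)
    (hm : X.IsBalanced n m)
    (l : ℕ) (hl : l + 2 ≤ n)
    (φ ψ : (Fin 1 → V) → ℝ) :
    X.innerF m 2 (dOp φ) (dOp ψ) =
      X.sumOSimp (l + 1) fun τ =>
        (X.link (Finset.image τ Finset.univ)).innerF
          (linkWt m (Finset.image τ Finset.univ)) 2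
          (dOp ((X.link (Finset.image τ Finset.univ)).restrict φ))
          (dOp ((X.link (Finset.image τ Finset.univ)).restrict ψ)) := by
  calc X.innerF m 2 (dOp φ) (dOp ψ)
      = ∑ σ : Fin 2 → V, ∑ τ : Fin (l + 1) → V,
          X.linkWtOf m σ τ / (Nat.factorial 2 : ℝ) * (dOp φ σ * dOp ψ σ) := by
        simp only [innerF, hm.wt_eq_sum_linkWtOf (j := 2) (k := l + 1) (by omega), sum_div,
          sum_mul]
    _ = ∑ τ : Fin (l + 1) → V, ∑ σ : Fin 2 → V,
          X.linkWtOf m τ σ / (Nat.factorial 2 : ℝ) * (dOp φ σ * dOp ψ σ) := by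
        rw [sum_comm]
        simp only [X.linkWtOf_comm m _ (_ : Fin 2 → V)]
    _ = _ := by
        refine sum_congr rfl fun τ _ => ?_
        dsimp only
        rw [innerF_dOp_restrict]
        unfold linkWtOf innerF
        split_ifs <;> simp

/-- Lemma 3.13: restriction of the differential of `0`-forms:
`⟨dφ,dψ⟩ = ∑_{τ∈Σ(l)} ⟨d_τφ^τ,d_τψ^τ⟩`, the inner products on the right taken in the links. -/
theorem restriction_of_differential
    (X : SComplex V) (n : ℕ) (m : Finset V → ℝ)
    (hn : 1 < n) (hpure : X.Pure n) (hm : X.IsBalanced n m)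
    (l : ℕ) (hl : l + 2 ≤ n)
    (φ ψ : (Fin 1 → V) → ℝ) (hφ : X.IsForm 1 φ) (hψ : X.IsForm 1 ψ) :
    X.innerF m 2 (dOp φ) (dOp ψ) =
      X.sumOSimp (l + 1) fun τ =>
        (X.link (Finset.image τ Finset.univ)).innerF
          (linkWt m (Finset.image τ Finset.univ)) 2
          (dOp ((X.link (Finset.image τ Finset.univ)).restrict φ))
          (dOp ((X.link (Finset.image τ Finset.univ)).restrict ψ)) :=
  restriction_of_differential_general X n m hm l hl φ ψ
end
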